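/- arXiv:2502.02826 — 11 statements merged into one kernel-verified Lean document; each statement's English description precedes it below -/
import Mathlib

section
/- A matching M in a finite simple graph Γ is positive (i.e., there exists a weight function w : V → ℝ such that for every edge uv of Γ, w(u)+w(v) > 0 if and only if uv ∈ M) if and only if the subgraph induced by the vertex set of M contains no closed walk whose edges alternate between M and E(Γ)\M. -/
open SimpleGraph

variable {V : Type*}

/-- A positive matching in a simple graph: a set `M` of pairwise disjoint edges of `G` together
with a vertex weighting `w` such that an edge `uv` of `G` satisfies `w u + w v > 0` iff the edge
belongs to `M`. -/
def IsPositiveMatching (G : SimpleGraph V) (M : Set (Sym2 V)) : Prop :=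
  M ⊆ G.edgeSet ∧
  (∀ e ∈ M, ∀ f ∈ M, e ≠ f → ∀ v : V, v ∈ e → v ∉ f) ∧
  ∃ w : V → ℝ, ∀ u v : V, G.Adj u v → (0 < w u + w v ↔ s(u, v) ∈ M)

/-- A positive matching decomposition of `G` with parts `E 0, …, E (p-1)`: an ordered partition
of the edge set of `G` such that each part is a positive matching of `G` minus the earlier
parts. -/
def IsPMD (G : SimpleGraph V) {p : ℕ} (E : Fin p → Set (Sym2 V)) : Prop :=
  (∀ i j : Fin p, i ≠ j → Disjoint (E i) (E j)) ∧
  (⋃ i, E i) = G.edgeSet ∧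
  ∀ i : Fin p, IsPositiveMatching (G.deleteEdges (⋃ j : Fin p, ⋃ (_ : j < i), E j)) (E i)

/-- The minimum number of parts in a positive matching decomposition of `G`. -/
noncomputable def pmd (G : SimpleGraph V) : ℕ :=
  sInf {p : ℕ | ∃ E : Fin p → Set (Sym2 V), IsPMD G E}

/-- `G` contains, inside the subgraph induced by the vertices of `M`, a closed walk whose edges
alternate between edges of `M` and edges of `G` not in `M`. -/
def HasAlternatingClosedWalk (G : SimpleGraph V) (M : Set (Sym2 V)) : Prop :=
  ∃ (n : ℕ) (v : ℕ → V), 0 < n ∧ v (2 * n) = v 0 ∧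
    (∀ i < 2 * n, G.Adj (v i) (v (i + 1))) ∧
    (∀ i < 2 * n, ∃ e ∈ M, v i ∈ e) ∧
    (∀ i < 2 * n, (s(v i, v (i + 1)) ∈ M ↔ i % 2 = 0))

private lemma transGen_chain {α : Type*} {R : α → α → Prop} {a b : α}
    (h : Relation.TransGen R a b) :
    ∃ (m : ℕ) (c : ℕ → α), 0 < m ∧ c 0 = a ∧ c m = b ∧ ∀ k < m, R (c k) (c (k + 1)) := by
  induction h with
  | single hr =>
      rename_i b'
      refine ⟨1, fun k => if k = 0 then a else b', one_pos, by simp, by simp, ?_⟩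
      intro k hk
      interval_cases k
      simpa using hr
  | tail hab hr ih =>
      rename_i b' c'
      obtain ⟨m, c, hm, h0, hb, hch⟩ := ih
      refine ⟨m + 1, fun k => if k = m + 1 then c' else c k, Nat.succ_pos _,
        by simp only [if_neg (by omega : (0:ℕ) ≠ m + 1)]; exact h0, by simp, ?_⟩
      intro k hk
      rcases Nat.lt_or_ge k m with h | h
      · simp only [if_neg (by omega : k ≠ m + 1), if_neg (by omega : k + 1 ≠ m + 1)]
        exact hch k h
      · have hkm : k = m := by omega
        subst hkm
        simp only [if_neg (by omega : k ≠ k + 1), if_pos rfl, hb]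
        exact hr

/-- A matching `M` in a finite simple graph `G` is positive iff the subgraph induced by the
vertex set of `M` contains no alternating closed walk. -/
theorem positiveMatching_iff_no_alternating_closed_walk [Fintype V] (G : SimpleGraph V)
    (M : Set (Sym2 V)) (hsub : M ⊆ G.edgeSet)
    (hmatch : ∀ e ∈ M, ∀ f ∈ M, e ≠ f → ∀ v : V, v ∈ e → v ∉ f) :
    (∃ w : V → ℝ, ∀ u v : V, G.Adj u v → (0 < w u + w v ↔ s(u, v) ∈ M)) ↔
      ¬ HasAlternatingClosedWalk G M := by
  classical
  constructor
  · rintro ⟨w, hw⟩ ⟨n, v, hn, hclose, hadj, hmem, halt⟩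
    have hzero : ∑ i ∈ Finset.range (2 * n), ((-1:ℝ)^i * (w (v i) + w (v (i+1)))) = 0 := by
      have := Finset.sum_range_sub' (fun i => (-1:ℝ)^i * w (v i)) (2 * n)
      calc ∑ i ∈ Finset.range (2 * n), ((-1:ℝ)^i * (w (v i) + w (v (i+1))))
          = ∑ i ∈ Finset.range (2 * n),
              ((fun i => (-1:ℝ)^i * w (v i)) i - (fun i => (-1:ℝ)^i * w (v i)) (i+1)) := by
            refine Finset.sum_congr rfl fun i _ => ?_
            simp only [pow_succ]
            ring
        _ = (-1:ℝ)^0 * w (v 0) - (-1:ℝ)^(2*n) * w (v (2*n)) := this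
        _ = 0 := by
            rw [hclose, pow_mul]
            norm_num
    have hpos : 0 < ∑ i ∈ Finset.range (2 * n), ((-1:ℝ)^i * (w (v i) + w (v (i+1)))) := by
      apply Finset.sum_pos'
      · intro i hi
        rw [Finset.mem_range] at hi
        rcases Nat.even_or_odd i with he | ho
        · rw [he.neg_one_pow, one_mul]
          have := (hw _ _ (hadj i hi)).mpr ((halt i hi).mpr (Nat.even_iff.mp he))
          linarith
        · rw [ho.neg_one_pow, neg_one_mul]
          have h1 : ¬ (s(v i, v (i+1)) ∈ M) := by
            rw [halt i hi]
            rw [Nat.odd_iff] at ho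
            omega
          have := (hw _ _ (hadj i hi)).not.mpr h1
          push_neg at this
          linarith
      · refine ⟨0, Finset.mem_range.mpr (by omega), ?_⟩
        have h0 : (0:ℕ) < 2 * n := by omega
        have := (hw _ _ (hadj 0 h0)).mpr ((halt 0 h0).mpr rfl)
        simp only [pow_zero, one_mul]
        linarith
    linarith
  · intro hno
    unfold HasAlternatingClosedWalk at hno
    set R : V → V → Prop := fun u y => (∃ z, s(u, z) ∈ M) ∧
        ∃ x, G.Adj u x ∧ s(u, x) ∉ M ∧ s(x, y) ∈ M with hRdef0
    have hRdef : ∀ u y, R u y ↔ ((∃ z, s(u, z) ∈ M) ∧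
        ∃ x, G.Adj u x ∧ s(u, x) ∉ M ∧ s(x, y) ∈ M) := fun u y => Iff.rfl
    have hcyc : ∀ u, ¬ Relation.TransGen R u u := by
      intro u hu
      obtain ⟨m, c, hm, h0, hmm, hch⟩ := transGen_chain hu
      apply hno
      set u' : ℕ → V := fun k => c (k % m) with hu'
      have hmod : ∀ a : ℕ, (a % m + 1) % m = (a + 1) % m :=
        fun a => (Nat.mod_modEq a m).add_right 1
      have key2 : ∀ a b : ℕ, a % m = b % m → u' a = u' b := by
        intro a b h; simp only [hu', h]
      have hR : ∀ k, R (u' k) (u' (k + 1)) := by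
        intro k
        have hk : k % m < m := Nat.mod_lt _ hm
        have hstep := hch _ hk
        have he : u' (k + 1) = c (k % m + 1) := by
          show c ((k + 1) % m) = c (k % m + 1)
          rw [← hmod k]
          by_cases h : k % m + 1 = m
          · rw [h, Nat.mod_self, h0, ← hmm, ← h]
          · rw [Nat.mod_eq_of_lt (by omega)]
        rw [he]
        exact hstep
      choose x hadjx hnM hM using fun k => ((hRdef _ _).mp (hR k)).2
      have hmat : ∀ k, ∃ z, s(u' k, z) ∈ M := fun k => ((hRdef _ _).mp (hR k)).1
      refine ⟨m, fun i => if i % 2 = 0 then x ((i / 2 + (m - 1)) % m) else u' (i / 2),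
        hm, ?_, ?_, ?_, ?_⟩
      · simp only [if_pos (by omega : 2 * m % 2 = 0), if_pos (by omega : 0 % 2 = 0)]
        congr 1
        rw [(by omega : 2 * m / 2 = m), (by omega : 0 / 2 = 0),
          (by omega : m + (m - 1) = (m - 1) + m), Nat.add_mod_right, Nat.zero_add]
      · intro i hi
        by_cases hp : i % 2 = 0
        · have hk2 : (i + 1) % 2 ≠ 0 := by omega
          have hd : (i + 1) / 2 = i / 2 := by omega
          simp only [if_pos hp, if_neg hk2, hd]
          set k := i / 2
          set j := (k + (m - 1)) % m with hj
          have hend : u' (j + 1) = u' k := by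
            apply key2
            rw [hj, hmod, (by omega : k + (m - 1) + 1 = k + m), Nat.add_mod_right]
          have hmem' := hM j
          rw [hend] at hmem'
          rw [← SimpleGraph.mem_edgeSet]
          exact hsub hmem'
        · have hk2 : (i + 1) % 2 = 0 := by omega
          have hd : (i + 1) / 2 = i / 2 + 1 := by omega
          have hklt : i / 2 < m := by omega
          simp only [if_neg hp, if_pos hk2, hd]
          have harg : (i / 2 + 1 + (m - 1)) % m = i / 2 := by
            rw [(by omega : i / 2 + 1 + (m - 1) = i / 2 + m), Nat.add_mod_right,
              Nat.mod_eq_of_lt hklt]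
          rw [harg]
          exact hadjx _
      · intro i hi
        by_cases hp : i % 2 = 0
        · simp only [if_pos hp]
          exact ⟨_, hM _, Sym2.mem_mk_left _ _⟩
        · simp only [if_neg hp]
          obtain ⟨z, hz⟩ := hmat (i / 2)
          exact ⟨_, hz, Sym2.mem_mk_left _ _⟩
      · intro i hi
        by_cases hp : i % 2 = 0
        · have hk2 : (i + 1) % 2 ≠ 0 := by omega
          have hd : (i + 1) / 2 = i / 2 := by omega
          simp only [if_pos hp, if_neg hk2, hd]
          set k := i / 2
          set j := (k + (m - 1)) % m with hj
          have hend : u' (j + 1) = u' k := by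
            apply key2
            rw [hj, hmod, (by omega : k + (m - 1) + 1 = k + m), Nat.add_mod_right]
          have hmem' := hM j
          rw [hend] at hmem'
          simp [hmem', hp]
        · have hk2 : (i + 1) % 2 = 0 := by omega
          have hd : (i + 1) / 2 = i / 2 + 1 := by omega
          have hklt : i / 2 < m := by omega
          simp only [if_neg hp, if_pos hk2, hd]
          have harg : (i / 2 + 1 + (m - 1)) % m = i / 2 := by
            rw [(by omega : i / 2 + 1 + (m - 1) = i / 2 + m), Nat.add_mod_right,
              Nat.mod_eq_of_lt hklt]
          rw [harg]
          simp [hnM _, hp]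
    -- build the weight function
    have huniq : ∀ u x y : V, s(u, x) ∈ M → s(u, y) ∈ M → x = y := by
      intro u x y hx hy
      by_contra hne
      have hne' : s(u, x) ≠ s(u, y) := by
        intro h
        rw [Sym2.eq_iff] at h
        rcases h with ⟨-, h⟩ | ⟨h1, h2⟩
        · exact hne h
        · exact hne (h2.trans h1)
      exact hmatch _ hx _ hy hne' u (Sym2.mem_mk_left _ _) (Sym2.mem_mk_left _ _)
    set matched : V → Prop := fun u => ∃ z, s(u, z) ∈ M with hmatched
    set p : V → V := fun u => if h : matched u then h.choose else u with hpdef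
    have hp : ∀ u, matched u → s(u, p u) ∈ M := by
      intro u h
      simp only [hpdef, dif_pos h]
      exact h.choose_spec
    have hpu : ∀ u x, s(u, x) ∈ M → p u = x := fun u x h => huniq u _ x (hp u ⟨x, h⟩) h
    set r : V → ℕ := fun u => (Finset.univ.filter fun v => Relation.TransGen R v u).card
      with hrdef
    have hrlt : ∀ u y, R u y → r u < r y := by
      intro u y h
      apply Finset.card_lt_card
      rw [Finset.ssubset_iff_of_subset]
      · exact ⟨u, by simp [Relation.TransGen.single h], by simpa using hcyc u⟩
      · intro v hv
        simp only [Finset.mem_filter, Finset.mem_univ, true_and] at hv ⊢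
        exact hv.tail h
    have hrle : ∀ u, r u ≤ Fintype.card V := fun u =>
      le_trans (Finset.card_filter_le _ _) (le_of_eq (Finset.card_univ))
    set N : ℝ := (Fintype.card V : ℝ) with hN
    have hN0 : 0 ≤ N := by positivity
    set w : V → ℝ := fun u => if matched u then (r u : ℝ) - (r (p u) : ℝ) + 1/2 else -(2*N + 2)
      with hwdef
    have hwle : ∀ u, w u ≤ N + 1/2 := by
      intro u
      simp only [hwdef]
      split
      · have h1 : (r u : ℝ) ≤ N := by rw [hN]; exact_mod_cast hrle u
        have h2 : (0:ℝ) ≤ (r (p u) : ℝ) := by positivity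
        linarith
      · linarith
    refine ⟨w, ?_⟩
    intro u v huv
    constructor
    · intro hposuv
      by_contra hnm
      by_cases hu : matched u <;> by_cases hv : matched v
      · have hRu : R u (p v) := (hRdef _ _).mpr ⟨hu, v, huv, hnm, hp v hv⟩
        have hRv : R v (p u) := (hRdef _ _).mpr ⟨hv, u, huv.symm, by rwa [Sym2.eq_swap], hp u hu⟩
        have h1 : (r u : ℝ) + 1 ≤ (r (p v) : ℝ) := by exact_mod_cast hrlt _ _ hRu
        have h2 : (r v : ℝ) + 1 ≤ (r (p u) : ℝ) := by exact_mod_cast hrlt _ _ hRv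
        simp only [hwdef, if_pos hu, if_pos hv] at hposuv
        linarith
      · have := hwle u
        simp only [hwdef, if_pos hu, if_neg hv] at hposuv this
        linarith
      · have := hwle v
        simp only [hwdef, if_neg hu, if_pos hv] at hposuv this
        linarith
      · simp only [hwdef, if_neg hu, if_neg hv] at hposuv
        linarith
    · intro hM
      have hu : matched u := ⟨v, hM⟩
      have hv : matched v := ⟨u, by rwa [Sym2.eq_swap]⟩
      have h1 : p u = v := hpu u v hM
      have h2 : p v = u := hpu v u (by rwa [Sym2.eq_swap])
      simp only [hwdef, if_pos hu, if_pos hv, h1, h2]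
      ring_nf
      norm_num
end

section
/- A matching M in a finite simple graph Γ is positive if and only if there is an ordering e_1, …, e_n of M such that for each i, the edge e_i has an endpoint of degree 1 in the subgraph of Γ induced by the vertex set of {e_1, …, e_i}. -/
open SimpleGraph

variable {V : Type*}

/-
If `w` is a positive weighting, list `M` by increasing `max (w a) (w b)` over its edges `s(a, b)`.
When `s(u, v)` comes up with `w v ≤ w u`, an earlier-or-equal edge `s(x, y)` with `x ≠ v`
adjacent to `u` would give `w u + w x ≤ 0 < w x + w y` and `w y ≤ w u`, which is absurd; so `u`
is pendant. Conversely, for a pendant ordering with pendant endpoints `uᵢ` and partners `vᵢ`,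
the weights `w uᵢ = i + 2`, `w vᵢ = -(i + 1)` and `-(n + 2)` elsewhere make exactly the edges
of `M` positive.
-/

theorem Set.Finite.exists_nodup_pairwise_le {α β : Type*} [LinearOrder β] {s : Set α}
    (hs : s.Finite) (f : α → β) :
    ∃ l : List α, l.Nodup ∧ (∀ a, a ∈ l ↔ a ∈ s) ∧ l.Pairwise (fun a b => f a ≤ f b) := by
  refine ⟨hs.toFinset.toList.mergeSort (fun a b => f a ≤ f b),
    (Finset.nodup_toList _).mergeSort, fun a => by simp, ?_⟩
  simpa using List.pairwise_mergeSort (le := fun a b => decide (f a ≤ f b))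
    (fun a b c hab hbc => by simp only [decide_eq_true_eq] at *; exact hab.trans hbc)
    (fun a b => by simpa using le_total (f a) (f b)) _

theorem List.Pairwise.rel_of_mem_take_succ {α : Type*} {r : α → α → Prop} {l : List α}
    (hl : l.Pairwise r) (hr : ∀ a, r a a) {i : ℕ} (hi : i < l.length) {a : α}
    (ha : a ∈ l.take (i + 1)) : r a l[i] := by
  obtain ⟨j, hj, rfl⟩ := List.mem_take_iff_getElem.1 ha
  rcases (Nat.lt_succ_iff_lt_or_eq.1 (lt_of_lt_of_le hj (min_le_left _ _))) with hji | rfl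
  · exact List.pairwise_iff_getElem.1 hl j i _ hi hji
  · exact hr _

def IsVertexDisjoint (M : Set (Sym2 V)) : Prop :=
  ∀ e ∈ M, ∀ f ∈ M, e ≠ f → ∀ v : V, v ∈ e → v ∉ f

def IsPositiveWeighting (G : SimpleGraph V) (M : Set (Sym2 V)) (w : V → ℝ) : Prop :=
  ∀ u v : V, G.Adj u v → (0 < w u + w v ↔ s(u, v) ∈ M)

def IsPendantOrdering (G : SimpleGraph V) (M : Set (Sym2 V)) (l : List (Sym2 V)) : Prop :=
  l.Nodup ∧ (∀ e, e ∈ l ↔ e ∈ M) ∧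
    ∀ i (hi : i < l.length), ∃ u v : V, l.get ⟨i, hi⟩ = s(u, v) ∧ G.Adj u v ∧
      (∀ x : V, (∃ e ∈ l.take (i + 1), x ∈ e) → G.Adj u x → x = v)

section PositiveToPendant

variable {G : SimpleGraph V} {M : Set (Sym2 V)} {w : V → ℝ}

theorem IsPositiveWeighting.eq_of_adj_of_sup_le (hw : IsPositiveWeighting G M w)
    (hsub : M ⊆ G.edgeSet) (hM : IsVertexDisjoint M) {u v x : V} {f : Sym2 V}
    (he : s(u, v) ∈ M) (hf : f ∈ M) (hfu : (f.map w).sup ≤ w u) (hx : x ∈ f)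
    (hux : G.Adj u x) : x = v := by
  by_contra hxv
  obtain ⟨y, rfl⟩ := Sym2.mem_iff_exists.1 hx
  have hux_notMem : s(u, x) ∉ M := fun h =>
    hM _ h _ he (mt Sym2.congr_right.1 hxv) u (Sym2.mem_mk_left _ _) (Sym2.mem_mk_left _ _)
  have hux_nonpos : w u + w x ≤ 0 := not_lt.1 (mt (hw u x hux).1 hux_notMem)
  have hxy_pos : 0 < w x + w y := (hw x y (hsub hf)).2 hf
  have hyu : w y ≤ w u := (le_sup_right (a := w x)).trans (by simpa using hfu)
  linarith

theorem Sym2.exists_eq_mk_sup_map_eq {α β : Type*} [LinearOrder β] (w : α → β) (e : Sym2 α) :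
    ∃ u v, e = s(u, v) ∧ (e.map w).sup = w u := by
  induction e using Sym2.ind with
  | _ a b =>
    rcases le_total (w a) (w b) with h | h
    · exact ⟨b, a, Sym2.eq_swap, by simp [h]⟩
    · exact ⟨a, b, rfl, by simp [h]⟩

theorem IsPositiveWeighting.exists_isPendantOrdering (hw : IsPositiveWeighting G M w)
    (hfin : M.Finite) (hsub : M ⊆ G.edgeSet) (hM : IsVertexDisjoint M) :
    ∃ l, IsPendantOrdering G M l := by
  obtain ⟨l, hnodup, hmem, hsorted⟩ := hfin.exists_nodup_pairwise_le fun e => (e.map w).sup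
  refine ⟨l, hnodup, hmem, fun i hi => ?_⟩
  obtain ⟨u, v, huv, hsup⟩ := Sym2.exists_eq_mk_sup_map_eq w l[i]
  have he : s(u, v) ∈ M := huv ▸ (hmem _).1 (l.getElem_mem hi)
  refine ⟨u, v, huv, hsub he, fun x ⟨f, hf, hx⟩ hux => ?_⟩
  have hfu : (f.map w).sup ≤ w u := hsup ▸ hsorted.rel_of_mem_take_succ (fun _ => le_rfl) hi hf
  exact hw.eq_of_adj_of_sup_le hsub hM he ((hmem f).1 (List.mem_of_mem_take hf)) hfu hx hux

end PositiveToPendant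

/-- `u i` is the pendant endpoint of the `i`-th edge `s(u i, v i)` of an ordered matching. -/
structure IsPendantSequence (G : SimpleGraph V) {n : ℕ} (u v : Fin n → V) : Prop where
  injective_left : Function.Injective u
  injective_right : Function.Injective v
  left_ne_right : ∀ i j, u i ≠ v j
  not_adj_left : ∀ i j, ¬ G.Adj (u i) (u j)
  eq_of_adj : ∀ i j, j ≤ i → G.Adj (u i) (v j) → j = i

/-- `w (u i) + w (v j) = i - j + 1` is positive exactly when `j ≤ i`, and vertices off the
sequence are so negative that no `w (u i)` compensates them. -/
noncomputable def pendantWeight {n : ℕ} (u v : Fin n → V) : V → ℝ :=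
  Function.extend u (fun i => (i : ℝ) + 2)
    (Function.extend v (fun j => -((j : ℝ) + 1)) fun _ => -((n : ℝ) + 2))

section PendantWeight

variable {n : ℕ} {u v : Fin n → V}

theorem pendantWeight_left (hu : Function.Injective u) (i : Fin n) :
    pendantWeight u v (u i) = (i : ℝ) + 2 :=
  hu.extend_apply _ _ _

theorem pendantWeight_right (hv : Function.Injective v) (huv : ∀ i j, u i ≠ v j) (j : Fin n) :
    pendantWeight u v (v j) = -((j : ℝ) + 1) := by
  rw [pendantWeight, Function.extend_apply' _ _ _ fun ⟨i, hi⟩ => huv i j hi, hv.extend_apply]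

theorem pendantWeight_of_notMem_range {x : V} (hxu : x ∉ Set.range u) (hxv : x ∉ Set.range v) :
    pendantWeight u v x = -((n : ℝ) + 2) := by
  rw [pendantWeight, Function.extend_apply' _ _ _ hxu, Function.extend_apply' _ _ _ hxv]

variable {G : SimpleGraph V}

theorem IsPendantSequence.pendantWeight_le_neg_one (h : IsPendantSequence G u v) {x : V}
    (hxu : x ∉ Set.range u) : pendantWeight u v x ≤ -1 := by
  by_cases hxv : x ∈ Set.range v
  · obtain ⟨j, rfl⟩ := hxv
    rw [pendantWeight_right h.injective_right h.left_ne_right]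
    linarith [(j.val.cast_nonneg : (0 : ℝ) ≤ j)]
  · rw [pendantWeight_of_notMem_range hxu hxv]
    linarith [(n.cast_nonneg : (0 : ℝ) ≤ n)]

theorem IsPendantSequence.eq_right_of_pendantWeight_pos (h : IsPendantSequence G u v) {i : Fin n}
    {y : V} (hadj : G.Adj (u i) y) (hpos : 0 < pendantWeight u v (u i) + pendantWeight u v y) :
    y = v i := by
  rw [pendantWeight_left h.injective_left] at hpos
  by_cases hyu : y ∈ Set.range u
  · obtain ⟨j, rfl⟩ := hyu
    exact absurd hadj (h.not_adj_left i j)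
  by_cases hyv : y ∈ Set.range v
  · obtain ⟨j, rfl⟩ := hyv
    rw [pendantWeight_right h.injective_right h.left_ne_right] at hpos
    have hji : j ≤ i := by
      rw [Fin.le_iff_val_le_val, ← Nat.lt_succ_iff, ← Nat.cast_lt (α := ℝ)]
      push_cast
      linarith
    rw [h.eq_of_adj i j hji hadj]
  · rw [pendantWeight_of_notMem_range hyu hyv] at hpos
    have : (i : ℝ) < n := by exact_mod_cast i.2
    linarith

theorem IsPendantSequence.pendantWeight_pos_iff (h : IsPendantSequence G u v) {x y : V}
    (hxy : G.Adj x y) :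
    0 < pendantWeight u v x + pendantWeight u v y ↔ ∃ i, s(u i, v i) = s(x, y) := by
  constructor
  · intro hpos
    by_cases hxu : x ∈ Set.range u
    · obtain ⟨i, rfl⟩ := hxu
      exact ⟨i, by rw [h.eq_right_of_pendantWeight_pos hxy hpos]⟩
    by_cases hyu : y ∈ Set.range u
    · obtain ⟨i, rfl⟩ := hyu
      rw [add_comm] at hpos
      exact ⟨i, by rw [h.eq_right_of_pendantWeight_pos hxy.symm hpos, Sym2.eq_swap]⟩
    · linarith [h.pendantWeight_le_neg_one hxu, h.pendantWeight_le_neg_one hyu]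
  · rintro ⟨i, hi⟩
    have hsum : pendantWeight u v (u i) + pendantWeight u v (v i) = 1 := by
      rw [pendantWeight_left h.injective_left, pendantWeight_right h.injective_right
        h.left_ne_right]
      ring
    rcases Sym2.eq_iff.1 hi with ⟨rfl, rfl⟩ | ⟨rfl, rfl⟩ <;> linarith

end PendantWeight

section PendantToPositive

variable {G : SimpleGraph V} {M : Set (Sym2 V)} {l : List (Sym2 V)}

theorem IsPendantOrdering.exists_isPendantSequence (hl : IsPendantOrdering G M l)
    (hM : IsVertexDisjoint M) :
    ∃ u v : Fin l.length → V, IsPendantSequence G u v ∧ ∀ i, l.get i = s(u i, v i) := by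
  obtain ⟨hnodup, hmem, hpend⟩ := hl
  choose u v hget hadj hpend using fun i : Fin l.length => hpend i i.2
  have hdisj : ∀ i j, i ≠ j → ∀ x, x ∈ l.get i → x ∉ l.get j := fun i j hij =>
    hM _ ((hmem _).1 (l.get_mem i)) _ ((hmem _).1 (l.get_mem j))
      (hij ∘ fun h => List.nodup_iff_injective_get.1 hnodup h)
  have hu : ∀ i, u i ∈ l.get i := fun i => hget i ▸ Sym2.mem_mk_left _ _
  have hv : ∀ i, v i ∈ l.get i := fun i => hget i ▸ Sym2.mem_mk_right _ _
  have hprefix : ∀ i j : Fin l.length, j ≤ i → ∀ x ∈ l.get j, ∃ e ∈ l.take (i + 1), x ∈ e :=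
    fun i j hji x hx => ⟨l.get j, List.mem_take_iff_getElem.2
      ⟨j, Nat.lt_min.2 ⟨Nat.lt_succ_of_le hji, j.2⟩, rfl⟩, hx⟩
  have left_ne_right : ∀ i j, u i ≠ v j := fun i j huv => by
    obtain rfl | hij := eq_or_ne i j
    · exact (hadj i).ne huv
    · exact hdisj i j hij _ (hu i) (huv ▸ hv j)
  refine ⟨u, v, ⟨fun i j huij => ?_, fun i j hvij => ?_, left_ne_right, fun i j hadj' => ?_,
    fun i j hji hadj' => ?_⟩, hget⟩
  · by_contra hij
    exact hdisj i j hij _ (hu i) (huij ▸ hu j)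
  · by_contra hij
    exact hdisj i j hij _ (hv i) (hvij ▸ hv j)
  · rcases le_total j i with hji | hij
    · exact left_ne_right j i (hpend i _ (hprefix i j hji _ (hu j)) hadj')
    · exact left_ne_right i j (hpend j _ (hprefix j i hij _ (hu i)) hadj'.symm)
  · by_contra hij
    exact hdisj i j (Ne.symm hij) _ (hv i) (hpend i _ (hprefix i j hji _ (hv j)) hadj' ▸ hv j)

theorem IsPendantOrdering.exists_isPositiveWeighting (hl : IsPendantOrdering G M l)
    (hM : IsVertexDisjoint M) : ∃ w, IsPositiveWeighting G M w := by
  obtain ⟨u, v, hseq, hget⟩ := hl.exists_isPendantSequence hM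
  refine ⟨pendantWeight u v, fun x y hxy => ?_⟩
  rw [hseq.pendantWeight_pos_iff hxy, ← hl.2.1, List.mem_iff_get]
  simp only [hget]

end PendantToPositive

/-- A matching `M` in a finite simple graph `G` is positive iff there is an ordering
`e₁, …, eₙ` of `M` such that each `eᵢ` is a pendant edge (has an endpoint of degree 1) in the
subgraph of `G` induced by the vertex set of `{e₁, …, eᵢ}`. -/
theorem positiveMatching_iff_pendant_ordering [Fintype V] (G : SimpleGraph V)
    (M : Set (Sym2 V)) (hsub : M ⊆ G.edgeSet)
    (hmatch : ∀ e ∈ M, ∀ f ∈ M, e ≠ f → ∀ v : V, v ∈ e → v ∉ f) :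
    (∃ w : V → ℝ, ∀ u v : V, G.Adj u v → (0 < w u + w v ↔ s(u, v) ∈ M)) ↔
      ∃ l : List (Sym2 V), l.Nodup ∧ (∀ e, e ∈ l ↔ e ∈ M) ∧
        ∀ i (hi : i < l.length), ∃ u v : V,
          l.get ⟨i, hi⟩ = s(u, v) ∧ G.Adj u v ∧
          -- `u` has degree 1 in the subgraph induced by the vertex set of the first `i+1` edges:
          -- its unique neighbor among these vertices is `v`
          (∀ x : V, (∃ e ∈ l.take (i + 1), x ∈ e) → G.Adj u x → x = v) :=
  ⟨fun ⟨_, hw⟩ => IsPositiveWeighting.exists_isPendantOrdering hw M.toFinite hsub hmatch,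
    fun ⟨_, hl⟩ => IsPendantOrdering.exists_isPositiveWeighting hl hmatch⟩
end

section
/- For any two finite simple graphs Γ₁ and Γ₂, pmd(Γ₁ □ Γ₂) ≤ min( pmd(Γ₁)·χ(Γ₂) + pmd(Γ₂), pmd(Γ₂)·χ(Γ₁) + pmd(Γ₁) ), where □ denotes the Cartesian product and χ the chromatic number. -/
open SimpleGraph

variable {V : Type*}

/- ### Helper lemmas -/

private lemma horiz_eq_horiz {V₁ V₂ : Type*} {a a' a₂ a₂' : V₁} {b b₂ : V₂}
    (h : s((a, b), (a', b)) = s((a₂, b₂), (a₂', b₂))) :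
    b = b₂ ∧ s(a, a') = s(a₂, a₂') := by
  rw [Sym2.eq_iff] at h
  rcases h with ⟨h1, h2⟩ | ⟨h1, h2⟩ <;>
    simp_all [Prod.ext_iff, Sym2.eq_iff]

private lemma horiz_ne_vert {V₁ V₂ : Type*} {a a' x : V₁} {b y y' : V₂}
    (hne : a ≠ a') (h : s((a, b), (a', b)) = s((x, y), (x, y'))) : False := by
  rw [Sym2.eq_iff] at h
  rcases h with ⟨h1, h2⟩ | ⟨h1, h2⟩ <;> simp_all [Prod.ext_iff]

private lemma vert_eq_vert {V₁ V₂ : Type*} {a a₂ : V₁} {b b' b₂ b₂' : V₂}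
    (h : s((a, b), (a, b')) = s((a₂, b₂), (a₂, b₂'))) :
    a = a₂ ∧ s(b, b') = s(b₂, b₂') := by
  rw [Sym2.eq_iff] at h
  rcases h with ⟨h1, h2⟩ | ⟨h1, h2⟩ <;> simp_all [Prod.ext_iff, Sym2.eq_iff]

private lemma idx_div {i t k : ℕ} (ht : t < k) : (i * k + t) / k = i := by
  rw [Nat.add_comm, Nat.mul_comm, Nat.add_mul_div_left _ _ (Nat.pos_of_ne_zero (by omega)),
    Nat.div_eq_of_lt ht, Nat.zero_add]

private lemma idx_mod {i t k : ℕ} (ht : t < k) : (i * k + t) % k = t := by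
  rw [Nat.add_comm, Nat.add_mul_mod_self_right, Nat.mod_eq_of_lt ht]

private lemma idx_lt {i t p k : ℕ} (hi : i < p) (ht : t < k) : i * k + t < p * k :=
  calc i * k + t < i * k + k := by omega
  _ = (i + 1) * k := by ring
  _ ≤ p * k := Nat.mul_le_mul_right _ (by omega)

private lemma div_lt_of_lt_mul' {x p k : ℕ} (h : x < p * k) : x / k < p :=
  Nat.div_lt_of_lt_mul (by rwa [Nat.mul_comm] at h)

private lemma exists_isPMD [Fintype V] (G : SimpleGraph V) :
    ∃ p : ℕ, ∃ E : Fin p → Set (Sym2 V), IsPMD G E := by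
  classical
  haveI : Finite (Sym2 V) :=
    Finite.of_surjective (fun p : V × V => s(p.1, p.2))
      (fun e => Sym2.ind (fun x y => ⟨(x, y), rfl⟩) e)
  haveI : Fintype G.edgeSet := Fintype.ofFinite _
  set φ := Fintype.equivFin G.edgeSet with hφ
  set f : Fin (Fintype.card G.edgeSet) → Sym2 V := fun i => (φ.symm i : Sym2 V) with hf
  have finj : Function.Injective f :=
    Subtype.coe_injective.comp φ.symm.injective
  refine ⟨Fintype.card G.edgeSet, fun i => {f i}, ?_, ?_, ?_⟩
  · intro i j hij
    exact Set.disjoint_singleton.mpr fun he => hij (finj he)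
  · ext e
    simp only [Set.mem_iUnion, Set.mem_singleton_iff]
    constructor
    · rintro ⟨i, rfl⟩; exact (φ.symm i).2
    · intro he; exact ⟨φ ⟨e, he⟩, by simp [hf]⟩
  · intro i
    refine ⟨?_, ?_, ?_⟩
    · intro e he
      rw [Set.mem_singleton_iff] at he; subst he
      rw [edgeSet_deleteEdges]
      refine ⟨(φ.symm i).2, ?_⟩
      simp only [Set.mem_iUnion, Set.mem_singleton_iff]
      rintro ⟨j, hji, hj⟩
      exact absurd (finj hj) (by intro h; subst h; exact lt_irrefl _ hji)
    · intro e he g hg hne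
      rw [Set.mem_singleton_iff] at he hg
      exact absurd (he.trans hg.symm) hne
    · have hne : ¬ (f i).IsDiag := G.not_isDiag_of_mem_edgeSet (show f i ∈ G.edgeSet from (φ.symm i).2)
      refine ⟨fun v => if v ∈ f i then 1 else -3, ?_⟩
      intro u v huv
      have hadj : G.Adj u v := (SimpleGraph.deleteEdges_adj.mp huv).1
      have huvne : u ≠ v := hadj.ne
      rw [Set.mem_singleton_iff]
      by_cases hu : u ∈ f i <;> by_cases hv : v ∈ f i <;>
        simp only [if_pos, if_neg, hu, hv, if_true, if_false]
      · constructor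
        · intro _; exact ((Sym2.mem_and_mem_iff huvne).mp ⟨hu, hv⟩).symm
        · intro _; norm_num
      · constructor
        · intro h; norm_num at h
        · intro h; exact absurd (h ▸ Sym2.mem_mk_right u v) hv
      · constructor
        · intro h; norm_num at h
        · intro h; exact absurd (h ▸ Sym2.mem_mk_left u v) hu
      · constructor
        · intro h; norm_num at h
        · intro h; exact absurd (h ▸ Sym2.mem_mk_left u v) hu

private lemma pmd_le_of_isPMD {G : SimpleGraph V} {p : ℕ} {E : Fin p → Set (Sym2 V)}
    (h : IsPMD G E) : pmd G ≤ p := Nat.sInf_le ⟨E, h⟩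

private lemma exists_isPMD_pmd [Fintype V] (G : SimpleGraph V) :
    ∃ E : Fin (pmd G) → Set (Sym2 V), IsPMD G E := by
  have h : {p : ℕ | ∃ E : Fin p → Set (Sym2 V), IsPMD G E}.Nonempty := by
    obtain ⟨p, E, hE⟩ := exists_isPMD G; exact ⟨p, E, hE⟩
  exact Nat.sInf_mem h
private lemma sym2_roundtrip {V W : Type*} (f : V ≃ W) (e : Sym2 V) :
    Sym2.map f.symm (Sym2.map f e) = e := by
  rw [Sym2.map_map]
  simp

private lemma sym2_roundtrip' {V W : Type*} (f : V ≃ W) (e : Sym2 W) :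
    Sym2.map f (Sym2.map f.symm e) = e := by
  rw [Sym2.map_map]
  simp

private lemma mem_map_equiv {V W : Type*} (f : V ≃ W) (S : Set (Sym2 V)) (e : Sym2 W) :
    e ∈ Sym2.map f '' S ↔ Sym2.map f.symm e ∈ S := by
  constructor
  · rintro ⟨e', he', rfl⟩
    rwa [sym2_roundtrip]
  · intro h
    exact ⟨Sym2.map f.symm e, h, sym2_roundtrip' f e⟩

private lemma IsPMD.map_iso {V W : Type*} {G : SimpleGraph V} {H : SimpleGraph W}
    (φ : G ≃g H) {p : ℕ} {E : Fin p → Set (Sym2 V)} (h : IsPMD G E) :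
    IsPMD H fun i => Sym2.map φ.toEquiv '' E i := by
  obtain ⟨hdisj, hcov, hpos⟩ := h
  have hinj : Function.Injective (Sym2.map φ.toEquiv) :=
    Sym2.map.injective φ.toEquiv.injective
  have hiso : ∀ u v : W, H.Adj u v ↔ G.Adj (φ.toEquiv.symm u) (φ.toEquiv.symm v) :=
    fun u v => (φ.symm.map_rel_iff).symm
  have hedge : ∀ e : Sym2 W, e ∈ H.edgeSet ↔ Sym2.map φ.toEquiv.symm e ∈ G.edgeSet := by
    intro e
    induction e using Sym2.ind with
    | _ u v => rw [Sym2.map_pair_eq, mem_edgeSet, mem_edgeSet]; exact hiso u v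
  refine ⟨?_, ?_, ?_⟩
  · intro i j hne
    exact (Set.disjoint_image_iff hinj).mpr (hdisj i j hne)
  · rw [← Set.image_iUnion, hcov]
    ext e
    rw [mem_map_equiv]
    exact (hedge e).symm
  · intro i
    obtain ⟨hsub, hmatch, w, hw⟩ := hpos i
    have himg : (⋃ j : Fin p, ⋃ (_ : j < i), Sym2.map φ.toEquiv '' E j) =
        Sym2.map φ.toEquiv '' (⋃ j : Fin p, ⋃ (_ : j < i), E j) := by
      simp [Set.image_iUnion]
    rw [himg]
    set D := ⋃ j : Fin p, ⋃ (_ : j < i), E j with hD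
    refine ⟨?_, ?_, ?_⟩
    · rintro e ⟨e', he', rfl⟩
      have h2 := hsub he'
      rw [edgeSet_deleteEdges] at h2 ⊢
      refine ⟨?_, ?_⟩
      · rw [hedge, sym2_roundtrip]; exact h2.1
      · intro hmem
        exact h2.2 ((hinj.mem_set_image).mp hmem)
    · rintro e ⟨e₁, he₁, rfl⟩ g ⟨f₁, hf₁, rfl⟩ hne v hv hv'
      have hne' : e₁ ≠ f₁ := fun h => hne (by rw [h])
      obtain ⟨u, hu, rfl⟩ := Sym2.mem_map.mp hv
      obtain ⟨u', hu', hequ⟩ := Sym2.mem_map.mp hv'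
      exact hmatch e₁ he₁ f₁ hf₁ hne' u hu (by rwa [φ.toEquiv.injective hequ] at hu')
    · refine ⟨fun v => w (φ.toEquiv.symm v), ?_⟩
      intro u v hadj
      rw [SimpleGraph.deleteEdges_adj] at hadj
      have hG : (G.deleteEdges D).Adj (φ.toEquiv.symm u) (φ.toEquiv.symm v) := by
        rw [SimpleGraph.deleteEdges_adj]
        refine ⟨(hiso u v).mp hadj.1, fun hmem => hadj.2 ?_⟩
        rw [mem_map_equiv, Sym2.map_pair_eq]
        exact hmem
      rw [hw _ _ hG, mem_map_equiv, Sym2.map_pair_eq]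
private def hset {V₁ V₂ : Type*} (A : Set (Sym2 V₁)) (T : Set V₂) : Set (Sym2 (V₁ × V₂)) :=
  {e | ∃ a a' b, e = s((a, b), (a', b)) ∧ s(a, a') ∈ A ∧ b ∈ T}

private def vset {V₁ V₂ : Type*} (B : Set (Sym2 V₂)) : Set (Sym2 (V₁ × V₂)) :=
  {e | ∃ a b b', e = s((a, b), (a, b')) ∧ s(b, b') ∈ B}

private def extF {p : ℕ} {α : Type*} (E : Fin p → Set α) (n : ℕ) : Set α :=
  if h : n < p then E ⟨n, h⟩ else ∅

private def pp {V₁ V₂ : Type*} {p₁ p₂ : ℕ} (k : ℕ) (E₁ : Fin p₁ → Set (Sym2 V₁))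
    (E₂ : Fin p₂ → Set (Sym2 V₂)) (cn : V₂ → ℕ) (x : ℕ) : Set (Sym2 (V₁ × V₂)) :=
  if x < p₁ * k then hset (extF E₁ (x / k)) {b | cn b = x % k}
  else vset (extF E₂ (x - p₁ * k))

private lemma isPMD_boxProd {V₁ V₂ : Type*} [Fintype V₁]
    {G₁ : SimpleGraph V₁} {G₂ : SimpleGraph V₂} {p₁ p₂ k : ℕ}
    {E₁ : Fin p₁ → Set (Sym2 V₁)} {E₂ : Fin p₂ → Set (Sym2 V₂)}
    (h₁ : IsPMD G₁ E₁) (h₂ : IsPMD G₂ E₂) (c : G₂.Coloring (Fin k)) :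
    ∃ F : Fin (p₁ * k + p₂) → Set (Sym2 (V₁ × V₂)), IsPMD (G₁ □ G₂) F := by
  classical
  obtain ⟨hdisj₁, hcov₁, hpos₁⟩ := h₁
  obtain ⟨hdisj₂, hcov₂, hpos₂⟩ := h₂
  have hsub₁ : ∀ i, E₁ i ⊆ G₁.edgeSet := by
    intro i e he
    have h := (hpos₁ i).1 he
    rw [edgeSet_deleteEdges] at h
    exact h.1
  have hsub₂ : ∀ j, E₂ j ⊆ G₂.edgeSet := by
    intro j e he
    have h := (hpos₂ j).1 he
    rw [edgeSet_deleteEdges] at h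
    exact h.1
  set cn : V₂ → ℕ := fun b => (c b : ℕ) with hcndef
  have hcn : ∀ b, cn b < k := fun b => (c b).2
  have hcval : ∀ {b b' : V₂}, G₂.Adj b b' → cn b ≠ cn b' :=
    fun hadj heq => c.valid hadj (Fin.ext heq)
  have hdivlt : ∀ {x : ℕ}, x < p₁ * k → x / k < p₁ := fun {x} hx => div_lt_of_lt_mul' hx
  -- description of the parts
  have hppH : ∀ (x : ℕ) (hx : x < p₁ * k),
      pp k E₁ E₂ cn x = hset (E₁ ⟨x / k, hdivlt hx⟩) {b | cn b = x % k} := by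
    intro x hx
    simp only [pp, if_pos hx, extF, dif_pos (hdivlt hx)]
  have hppV : ∀ (x : ℕ) (hx : ¬ x < p₁ * k) (hx2 : x - p₁ * k < p₂),
      pp k E₁ E₂ cn x = vset (E₂ ⟨x - p₁ * k, hx2⟩) := by
    intro x hx hx2
    simp only [pp, if_neg hx, extF, dif_pos hx2]
  -- each part is a set of edges
  have hppSub : ∀ x : ℕ, pp k E₁ E₂ cn x ⊆ (G₁ □ G₂).edgeSet := by
    intro x e he
    by_cases hx : x < p₁ * k
    · rw [hppH x hx] at he
      obtain ⟨a, a', b, rfl, ha, -⟩ := he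
      exact (mem_edgeSet _).mpr (boxProd_adj.mpr (Or.inl ⟨(mem_edgeSet _).mp (hsub₁ _ ha), rfl⟩))
    · by_cases hx2 : x - p₁ * k < p₂
      · rw [hppV x hx hx2] at he
        obtain ⟨a, b, b', rfl, hb⟩ := he
        exact (mem_edgeSet _).mpr (boxProd_adj.mpr (Or.inr ⟨(mem_edgeSet _).mp (hsub₂ _ hb), rfl⟩))
      · simp only [pp, if_neg hx, extF, dif_neg hx2] at he
        obtain ⟨a, b, b', rfl, hb⟩ := he
        exact absurd hb (Set.notMem_empty _)
  -- key disjointness facts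
  have keyHH : ∀ (x y : ℕ) (hx : x < p₁ * k) (hy : y < p₁ * k) (e : Sym2 (V₁ × V₂)),
      e ∈ pp k E₁ E₂ cn x → e ∈ pp k E₁ E₂ cn y → x = y := by
    intro x y hx hy e hex hey
    rw [hppH x hx] at hex
    rw [hppH y hy] at hey
    obtain ⟨a, a', b, rfl, ha, hb⟩ := hex
    obtain ⟨a₂, a₂', b₂, heq, ha₂, hb₂⟩ := hey
    obtain ⟨hbb, hss⟩ := horiz_eq_horiz heq
    have hfin : (⟨x / k, hdivlt hx⟩ : Fin p₁) = ⟨y / k, hdivlt hy⟩ := by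
      by_contra hne
      exact Set.disjoint_left.mp (hdisj₁ _ _ hne) ha (by rw [hss]; exact ha₂)
    have hdeq : x / k = y / k := congrArg Fin.val hfin
    have hb' : cn b = x % k := hb
    have hb₂' : cn b₂ = y % k := hb₂
    have hmeq : x % k = y % k := by rw [← hb', hbb, hb₂']
    calc x = k * (x / k) + x % k := (Nat.div_add_mod x k).symm
      _ = k * (y / k) + y % k := by rw [hdeq, hmeq]
      _ = y := Nat.div_add_mod y k
  have keyHV : ∀ (x y : ℕ) (hx : x < p₁ * k) (hy : ¬ y < p₁ * k) (hy2 : y - p₁ * k < p₂)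
      (e : Sym2 (V₁ × V₂)), e ∈ pp k E₁ E₂ cn x → e ∈ pp k E₁ E₂ cn y → False := by
    intro x y hx hy hy2 e hex hey
    rw [hppH x hx] at hex
    rw [hppV y hy hy2] at hey
    obtain ⟨a, a', b, rfl, ha, -⟩ := hex
    obtain ⟨a₂, b₂, b₂', heq, -⟩ := hey
    exact horiz_ne_vert ((mem_edgeSet _).mp (hsub₁ _ ha)).ne heq
  have keyVV : ∀ (x y : ℕ) (hx : ¬ x < p₁ * k) (hx2 : x - p₁ * k < p₂)
      (hy : ¬ y < p₁ * k) (hy2 : y - p₁ * k < p₂)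
      (e : Sym2 (V₁ × V₂)), e ∈ pp k E₁ E₂ cn x → e ∈ pp k E₁ E₂ cn y → x = y := by
    intro x y hx hx2 hy hy2 e hex hey
    rw [hppV x hx hx2] at hex
    rw [hppV y hy hy2] at hey
    obtain ⟨a, b, b', rfl, hb⟩ := hex
    obtain ⟨a₂, b₂, b₂', heq, hb₂⟩ := hey
    obtain ⟨-, hss⟩ := vert_eq_vert heq
    have hfin : (⟨x - p₁ * k, hx2⟩ : Fin p₂) = ⟨y - p₁ * k, hy2⟩ := by
      by_contra hne
      exact Set.disjoint_left.mp (hdisj₂ _ _ hne) hb (by rw [hss]; exact hb₂)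
    have := congrArg Fin.val hfin
    simp only at this
    omega
  refine ⟨fun x => pp k E₁ E₂ cn x.val, ?_, ?_, ?_⟩
  · -- disjointness
    intro i j hne
    rw [Set.disjoint_left]
    intro e hei hej
    apply hne
    apply Fin.ext
    by_cases hi : (i : ℕ) < p₁ * k <;> by_cases hj : (j : ℕ) < p₁ * k
    · exact keyHH _ _ hi hj e hei hej
    · exact absurd (keyHV _ _ hi hj (by have := j.2; omega) e hei hej) not_false
    · exact absurd (keyHV _ _ hj hi (by have := i.2; omega) e hej hei) not_false
    · exact keyVV _ _ hi (by have := i.2; omega) hj (by have := j.2; omega) e hei hej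
  · -- covering
    ext e
    simp only [Set.mem_iUnion]
    constructor
    · rintro ⟨x, hx⟩
      exact hppSub _ hx
    · intro he
      induction e using Sym2.ind with
      | _ u v =>
        obtain ⟨a, b⟩ := u
        obtain ⟨a', b'⟩ := v
        rcases boxProd_adj.mp ((mem_edgeSet _).mp he) with ⟨hG, hbe⟩ | ⟨hG, hae⟩
        · obtain rfl : b = b' := hbe
          have : s(a, a') ∈ ⋃ i, E₁ i := by rw [hcov₁]; exact (mem_edgeSet _).mpr hG
          obtain ⟨i, hi⟩ := Set.mem_iUnion.mp this
          have hlt : (i : ℕ) * k + cn b < p₁ * k := idx_lt i.2 (hcn b)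
          refine ⟨⟨(i : ℕ) * k + cn b, by omega⟩, ?_⟩
          rw [hppH _ hlt]
          refine ⟨a, a', b, rfl, ?_, ?_⟩
          · have : ((i : ℕ) * k + cn b) / k = (i : ℕ) := idx_div (hcn b)
            simp only [this, Fin.eta]
            exact hi
          · show cn b = ((i : ℕ) * k + cn b) % k
            rw [idx_mod (hcn b)]
        · obtain rfl : a = a' := hae
          have : s(b, b') ∈ ⋃ j, E₂ j := by rw [hcov₂]; exact (mem_edgeSet _).mpr hG
          obtain ⟨j, hj⟩ := Set.mem_iUnion.mp this
          refine ⟨⟨p₁ * k + (j : ℕ), by have := j.2; omega⟩, ?_⟩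
          show _ ∈ pp k E₁ E₂ cn (p₁ * k + (j : ℕ))
          rw [hppV (p₁ * k + (j : ℕ)) (by omega) (by have := j.2; omega)]
          refine ⟨a, b, b', rfl, ?_⟩
          have : p₁ * k + (j : ℕ) - p₁ * k = (j : ℕ) := by omega
          simp only [this, Fin.eta]
          exact hj
  · -- positivity
    intro x
    show IsPositiveMatching ((G₁ □ G₂).deleteEdges
      (⋃ j : Fin (p₁ * k + p₂), ⋃ (_ : j < x), pp k E₁ E₂ cn j.val)) (pp k E₁ E₂ cn x.val)
    have hDmem : ∀ e : Sym2 (V₁ × V₂),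
        e ∈ (⋃ y : Fin (p₁ * k + p₂), ⋃ (_ : y < x), pp k E₁ E₂ cn y.val) ↔
          ∃ y : Fin (p₁ * k + p₂), y < x ∧ e ∈ pp k E₁ E₂ cn y.val := by
      intro e; simp [Set.mem_iUnion]
    by_cases hx : (x : ℕ) < p₁ * k
    · -- horizontal stage
      have hk : 0 < k := Nat.pos_of_ne_zero (by rintro rfl; omega)
      have ht : (x : ℕ) % k < k := Nat.mod_lt _ hk
      rw [hppH _ hx]
      refine ⟨?_, ?_, ?_⟩
      · -- subset
        intro e he
        rw [edgeSet_deleteEdges]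
        refine ⟨hppSub x.val (by rw [hppH _ hx]; exact he), ?_⟩
        rw [hDmem]
        rintro ⟨y, hyx, hey⟩
        by_cases hy : (y : ℕ) < p₁ * k
        · have := keyHH _ _ hy hx e hey (by rw [hppH _ hx]; exact he)
          rw [Fin.lt_def] at hyx
          omega
        · exact keyHV _ _ hx hy (by have := y.2; omega) e (by rw [hppH _ hx]; exact he) hey
      · -- matching
        rintro e ⟨a, a', b, rfl, ha, hb⟩ f ⟨a₂, a₂', b₂, rfl, ha₂, hb₂⟩ hef v hv hv'
        have h1 : v.1 ∈ s(a, a') ∧ v.2 = b := by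
          rcases Sym2.mem_iff.mp hv with rfl | rfl <;> simp
        have h2 : v.1 ∈ s(a₂, a₂') ∧ v.2 = b₂ := by
          rcases Sym2.mem_iff.mp hv' with rfl | rfl <;> simp
        have hbb : b = b₂ := by rw [← h1.2, h2.2]
        by_cases hs : s(a, a') = s(a₂, a₂')
        · apply hef
          subst hbb
          rcases Sym2.eq_iff.mp hs with ⟨rfl, rfl⟩ | ⟨rfl, rfl⟩
          · rfl
          · exact Sym2.eq_swap
        · exact (hpos₁ _).2.1 _ ha _ ha₂ hs v.1 h1.1 h2.1
      · -- weights
        obtain ⟨w₁, hw₁⟩ := (hpos₁ ⟨(x : ℕ) / k, hdivlt hx⟩).2.2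
        set N : ℝ := 1 + ∑ a : V₁, |w₁ a| with hN
        have hNlt : ∀ a, w₁ a < N := by
          intro a
          have h1 : |w₁ a| ≤ ∑ a : V₁, |w₁ a| :=
            Finset.single_le_sum (f := fun a => |w₁ a|) (fun _ _ => abs_nonneg _) (Finset.mem_univ a)
          have h2 := le_abs_self (w₁ a)
          rw [hN]; linarith
        have hN0 : 0 < N := by
          have : (0:ℝ) ≤ ∑ a : V₁, |w₁ a| := Finset.sum_nonneg fun _ _ => abs_nonneg _
          rw [hN]; linarith
        refine ⟨fun v => if cn v.2 = (x : ℕ) % k then w₁ v.1 else -N, ?_⟩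
        rintro ⟨a, b⟩ ⟨a', b'⟩ hadj
        rw [SimpleGraph.deleteEdges_adj] at hadj
        obtain ⟨hadj0, hnD⟩ := hadj
        rcases boxProd_adj.mp hadj0 with ⟨hG, hbe⟩ | ⟨hG, hae⟩
        · -- horizontal edge
          obtain rfl : b = b' := hbe
          by_cases hcb : cn b = (x : ℕ) % k
          · simp only [if_pos hcb]
            have hnotearlier : s(a, a') ∉ ⋃ j : Fin p₁,
                ⋃ (_ : j < ⟨(x : ℕ) / k, hdivlt hx⟩), E₁ j := by
              intro hmem
              simp only [Set.mem_iUnion] at hmem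
              obtain ⟨j, hji, hj⟩ := hmem
              apply hnD
              rw [hDmem]
              have hjlt : (j : ℕ) * k + (x : ℕ) % k < p₁ * k := idx_lt j.2 ht
              have hxval : (x : ℕ) = (x : ℕ) / k * k + (x : ℕ) % k :=
                (Nat.div_add_mod' _ _).symm
              have hji' : (j : ℕ) < (x : ℕ) / k := hji
              have hvlt : (j : ℕ) * k + (x : ℕ) % k < (x : ℕ) := by
                have : (j : ℕ) * k < (x : ℕ) / k * k := by
                  exact (Nat.mul_lt_mul_right hk).mpr hji'
                omega
              refine ⟨⟨(j : ℕ) * k + (x : ℕ) % k, by omega⟩, ?_, ?_⟩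
              · rw [Fin.lt_def]; exact hvlt
              · rw [hppH _ hjlt]
                refine ⟨a, a', b, rfl, ?_, ?_⟩
                · have : ((j : ℕ) * k + (x : ℕ) % k) / k = (j : ℕ) := idx_div ht
                  simp only [this, Fin.eta]
                  exact hj
                · show cn b = ((j : ℕ) * k + (x : ℕ) % k) % k
                  rw [idx_mod ht]; exact hcb
            have hGadj : (G₁.deleteEdges (⋃ j : Fin p₁,
                ⋃ (_ : j < ⟨(x : ℕ) / k, hdivlt hx⟩), E₁ j)).Adj a a' :=
              SimpleGraph.deleteEdges_adj.mpr ⟨hG, hnotearlier⟩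
            rw [hw₁ a a' hGadj]
            constructor
            · intro hmem
              exact ⟨a, a', b, rfl, hmem, hcb⟩
            · rintro ⟨a₂, a₂', b₂, heq, ha₂, hb₂⟩
              obtain ⟨hbe2, hse⟩ := horiz_eq_horiz heq
              rw [hse]; exact ha₂
          · refine iff_of_false ?_ ?_
            · simp only [if_neg hcb]
              push_neg
              linarith
            · rintro ⟨a₂, a₂', b₂, heq, ha₂, hb₂⟩
              obtain ⟨hbe2, -⟩ := horiz_eq_horiz heq
              exact hcb (by rw [hbe2]; exact hb₂)
        · -- vertical edge
          obtain rfl : a = a' := hae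
          have hbne : cn b ≠ cn b' := hcval hG
          refine iff_of_false ?_ ?_
          · by_cases hc1 : cn b = (x : ℕ) % k <;> by_cases hc2 : cn b' = (x : ℕ) % k
            · exact absurd (hc1.trans hc2.symm) hbne
            · simp only [if_pos hc1, if_neg hc2]
              push_neg
              linarith [hNlt a]
            · simp only [if_neg hc1, if_pos hc2]
              push_neg
              linarith [hNlt a]
            · simp only [if_neg hc1, if_neg hc2]
              push_neg
              linarith
          · rintro ⟨a₂, a₂', b₂, heq, ha₂, -⟩
            exact horiz_ne_vert ((mem_edgeSet _).mp (hsub₁ _ ha₂)).ne heq.symm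
    · -- vertical stage
      have hj2 : (x : ℕ) - p₁ * k < p₂ := by have := x.2; omega
      rw [hppV _ hx hj2]
      refine ⟨?_, ?_, ?_⟩
      · intro e he
        rw [edgeSet_deleteEdges]
        refine ⟨hppSub x.val (by rw [hppV _ hx hj2]; exact he), ?_⟩
        rw [hDmem]
        rintro ⟨y, hyx, hey⟩
        by_cases hy : (y : ℕ) < p₁ * k
        · exact keyHV _ _ hy hx hj2 e hey (by rw [hppV _ hx hj2]; exact he)
        · have := keyVV _ _ hy (by have := y.2; omega) hx hj2 e hey
            (by rw [hppV _ hx hj2]; exact he)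
          rw [Fin.lt_def] at hyx
          omega
      · rintro e ⟨a, b, b', rfl, hb⟩ f ⟨a₂, b₂, b₂', rfl, hb₂⟩ hef v hv hv'
        have h1 : v.1 = a ∧ v.2 ∈ s(b, b') := by
          rcases Sym2.mem_iff.mp hv with rfl | rfl <;> simp
        have h2 : v.1 = a₂ ∧ v.2 ∈ s(b₂, b₂') := by
          rcases Sym2.mem_iff.mp hv' with rfl | rfl <;> simp
        have haa : a = a₂ := by rw [← h1.1, h2.1]
        by_cases hs : s(b, b') = s(b₂, b₂')
        · apply hef
          subst haa
          rcases Sym2.eq_iff.mp hs with ⟨rfl, rfl⟩ | ⟨rfl, rfl⟩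
          · rfl
          · exact Sym2.eq_swap
        · exact (hpos₂ _).2.1 _ hb _ hb₂ hs v.2 h1.2 h2.2
      · obtain ⟨w₂, hw₂⟩ := (hpos₂ ⟨(x : ℕ) - p₁ * k, hj2⟩).2.2
        refine ⟨fun v => w₂ v.2, ?_⟩
        rintro ⟨a, b⟩ ⟨a', b'⟩ hadj
        rw [SimpleGraph.deleteEdges_adj] at hadj
        obtain ⟨hadj0, hnD⟩ := hadj
        rcases boxProd_adj.mp hadj0 with ⟨hG, hbe⟩ | ⟨hG, hae⟩
        · -- horizontal edge: impossible, it was removed in an earlier stage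
          exfalso
          obtain rfl : b = b' := hbe
          have : s(a, a') ∈ ⋃ i, E₁ i := by rw [hcov₁]; exact (mem_edgeSet _).mpr hG
          obtain ⟨i, hi⟩ := Set.mem_iUnion.mp this
          apply hnD
          rw [hDmem]
          have hlt : (i : ℕ) * k + cn b < p₁ * k := idx_lt i.2 (hcn b)
          refine ⟨⟨(i : ℕ) * k + cn b, by omega⟩, ?_, ?_⟩
          · rw [Fin.lt_def]
            show (i : ℕ) * k + cn b < (x : ℕ)
            omega
          · rw [hppH _ hlt]
            refine ⟨a, a', b, rfl, ?_, ?_⟩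
            · have : ((i : ℕ) * k + cn b) / k = (i : ℕ) := idx_div (hcn b)
              simp only [this, Fin.eta]
              exact hi
            · show cn b = ((i : ℕ) * k + cn b) % k
              rw [idx_mod (hcn b)]
        · obtain rfl : a = a' := hae
          have hnotearlier : s(b, b') ∉ ⋃ j : Fin p₂,
              ⋃ (_ : j < ⟨(x : ℕ) - p₁ * k, hj2⟩), E₂ j := by
            intro hmem
            simp only [Set.mem_iUnion] at hmem
            obtain ⟨j, hji, hj⟩ := hmem
            apply hnD
            rw [hDmem]
            have hji' : (j : ℕ) < (x : ℕ) - p₁ * k := hji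
            refine ⟨⟨p₁ * k + (j : ℕ), by omega⟩, ?_, ?_⟩
            · rw [Fin.lt_def]
              show p₁ * k + (j : ℕ) < (x : ℕ)
              omega
            · show _ ∈ pp k E₁ E₂ cn (p₁ * k + (j : ℕ))
              rw [hppV (p₁ * k + (j : ℕ)) (by omega) (by have := j.2; omega)]
              refine ⟨a, b, b', rfl, ?_⟩
              have heq : p₁ * k + (j : ℕ) - p₁ * k = (j : ℕ) := by omega
              simp only [heq, Fin.eta]
              exact hj
          have hGadj : (G₂.deleteEdges (⋃ j : Fin p₂,
              ⋃ (_ : j < ⟨(x : ℕ) - p₁ * k, hj2⟩), E₂ j)).Adj b b' :=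
            SimpleGraph.deleteEdges_adj.mpr ⟨hG, hnotearlier⟩
          rw [hw₂ b b' hGadj]
          constructor
          · intro hmem
            exact ⟨a, b, b', rfl, hmem⟩
          · rintro ⟨a₂, b₂, b₂', heq, hb₂⟩
            obtain ⟨-, hse⟩ := vert_eq_vert heq
            rw [hse]; exact hb₂
private lemma pmd_boxProd_le_nat {V₁ V₂ : Type*} [Fintype V₁] [Fintype V₂]
    (G₁ : SimpleGraph V₁) (G₂ : SimpleGraph V₂) {k : ℕ} (hc : G₂.Colorable k) :
    pmd (G₁ □ G₂) ≤ pmd G₁ * k + pmd G₂ := by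
  obtain ⟨E₁, h₁⟩ := exists_isPMD_pmd G₁
  obtain ⟨E₂, h₂⟩ := exists_isPMD_pmd G₂
  obtain ⟨F, hF⟩ := isPMD_boxProd h₁ h₂ hc.some
  exact pmd_le_of_isPMD hF

private lemma pmd_boxProd_le_nat' {V₁ V₂ : Type*} [Fintype V₁] [Fintype V₂]
    (G₁ : SimpleGraph V₁) (G₂ : SimpleGraph V₂) {k : ℕ} (hc : G₁.Colorable k) :
    pmd (G₁ □ G₂) ≤ pmd G₂ * k + pmd G₁ := by
  obtain ⟨E₁, h₁⟩ := exists_isPMD_pmd G₁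
  obtain ⟨E₂, h₂⟩ := exists_isPMD_pmd G₂
  obtain ⟨F, hF⟩ := isPMD_boxProd h₂ h₁ hc.some
  exact pmd_le_of_isPMD (hF.map_iso (SimpleGraph.boxProdComm G₂ G₁))


/-- `pmd(Γ₁ □ Γ₂) ≤ min(pmd(Γ₁)·χ(Γ₂) + pmd(Γ₂), pmd(Γ₂)·χ(Γ₁) + pmd(Γ₁))`. -/
theorem pmd_boxProd_le {V₁ V₂ : Type*} [Fintype V₁] [Fintype V₂]
    (G₁ : SimpleGraph V₁) (G₂ : SimpleGraph V₂) :
    (pmd (G₁ □ G₂) : ℕ∞) ≤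
      min ((pmd G₁ : ℕ∞) * G₂.chromaticNumber + (pmd G₂ : ℕ∞))
        ((pmd G₂ : ℕ∞) * G₁.chromaticNumber + (pmd G₁ : ℕ∞)) := by
  have hne₁ : G₁.chromaticNumber ≠ ⊤ :=
    chromaticNumber_ne_top_iff_exists.mpr ⟨_, G₁.colorable_of_fintype⟩
  have hne₂ : G₂.chromaticNumber ≠ ⊤ :=
    chromaticNumber_ne_top_iff_exists.mpr ⟨_, G₂.colorable_of_fintype⟩
  have hc₁ : G₁.Colorable (ENat.toNat G₁.chromaticNumber) :=
    G₁.colorable_chromaticNumber_of_fintype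
  have hc₂ : G₂.Colorable (ENat.toNat G₂.chromaticNumber) :=
    G₂.colorable_chromaticNumber_of_fintype
  have hk₁ : ((ENat.toNat G₁.chromaticNumber : ℕ) : ℕ∞) = G₁.chromaticNumber :=
    ENat.coe_toNat hne₁
  have hk₂ : ((ENat.toNat G₂.chromaticNumber : ℕ) : ℕ∞) = G₂.chromaticNumber :=
    ENat.coe_toNat hne₂
  refine le_min ?_ ?_
  · calc (pmd (G₁ □ G₂) : ℕ∞)
        ≤ ((pmd G₁ * ENat.toNat G₂.chromaticNumber + pmd G₂ : ℕ) : ℕ∞) :=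
          Nat.cast_le.mpr (pmd_boxProd_le_nat G₁ G₂ hc₂)
      _ = (pmd G₁ : ℕ∞) * ((ENat.toNat G₂.chromaticNumber : ℕ) : ℕ∞) + (pmd G₂ : ℕ∞) := by
          push_cast; ring
      _ = (pmd G₁ : ℕ∞) * G₂.chromaticNumber + (pmd G₂ : ℕ∞) := by rw [hk₂]
  · calc (pmd (G₁ □ G₂) : ℕ∞)
        ≤ ((pmd G₂ * ENat.toNat G₁.chromaticNumber + pmd G₁ : ℕ) : ℕ∞) :=
          Nat.cast_le.mpr (pmd_boxProd_le_nat' G₁ G₂ hc₁)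
      _ = (pmd G₂ : ℕ∞) * ((ENat.toNat G₁.chromaticNumber : ℕ) : ℕ∞) + (pmd G₁ : ℕ∞) := by
          push_cast; ring
      _ = (pmd G₂ : ℕ∞) * G₁.chromaticNumber + (pmd G₁ : ℕ∞) := by rw [hk₁]
end

section
/- For the n-dimensional hypercube Q_n (n ≥ 1), pmd(Q_n) ≤ 2n − 1. -/
/-!
For a direction `i` and `p : Fin 2`, the vertices whose coordinates off `i` sum to `p` form a
parity class. Adjacent vertices of the same class differ in coordinate `i`, so the edges inside a
class form a matching, positive for the weighting `1` on the class and `-1` off it. The `2(n - 1)`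
classes of the first `n - 1` directions give pairwise disjoint positive matchings of `Qₙ` itself,
hence of every subgraph containing them. Deleting them leaves exactly the perfect matching of the
last direction, which is positive in what remains for the constant weighting `1`.
-/

open SimpleGraph

variable {V : Type*}

/-- Box (Cartesian) product of a family of graphs. -/
def boxProdPi {ι : Type*} {W : ι → Type*} (G : ∀ i, SimpleGraph (W i)) :
    SimpleGraph (∀ i, W i) where
  Adj a b := ∃ i, (G i).Adj (a i) (b i) ∧ ∀ j, j ≠ i → a j = b j
  symm := ⟨fun _ _ ⟨i, h, hj⟩ => ⟨i, h.symm, fun j hji => (hj j hji).symm⟩⟩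
  loopless := ⟨fun a ⟨i, h, _⟩ => (G i).irrefl (v := a i) h⟩

/-- The `n`-dimensional hypercube graph `Qₙ = K₂ □ ⋯ □ K₂`. -/
def hypercube (n : ℕ) : SimpleGraph (Fin n → Fin 2) :=
  boxProdPi fun _ => (⊤ : SimpleGraph (Fin 2))

theorem IsPositiveMatching.mono {G H : SimpleGraph V} {M : Set (Sym2 V)}
    (hM : IsPositiveMatching G M) (hHG : H ≤ G) (hMH : M ⊆ H.edgeSet) :
    IsPositiveMatching H M := by
  obtain ⟨-, hdisj, w, hw⟩ := hM
  exact ⟨hMH, hdisj, w, fun u v huv => hw u v (hHG huv)⟩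

theorem isPositiveMatching_edgeSet_inter_sym2 {G : SimpleGraph V} {S : Set V}
    (hS : ∀ v ∈ S, ∀ a ∈ S, ∀ b ∈ S, G.Adj v a → G.Adj v b → a = b) :
    IsPositiveMatching G (G.edgeSet ∩ S.sym2) := by
  classical
  refine ⟨Set.inter_subset_left, ?_, fun v => if v ∈ S then 1 else -1, fun u v huv => ?_⟩
  · rintro e ⟨he, heS⟩ f ⟨hf, hfS⟩ hef v hve hvf
    obtain ⟨a, rfl⟩ := Sym2.mem_iff_exists.1 hve
    obtain ⟨b, rfl⟩ := Sym2.mem_iff_exists.1 hvf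
    rw [Set.mk_mem_sym2_iff] at heS hfS
    exact hef (by rw [hS v heS.1 a heS.2 b hfS.2 he hf])
  · simp only [Set.mem_inter_iff, mem_edgeSet, Set.mk_mem_sym2_iff, huv, true_and]
    split_ifs with hu hv hv <;> norm_num [hu, hv]

theorem pmd_le_card_add_one {ι : Type*} [Fintype ι] {G : SimpleGraph V} (E : ι → Set (Sym2 V))
    (hpos : ∀ i, IsPositiveMatching G (E i)) (hdisj : Pairwise fun i j => Disjoint (E i) (E j))
    (hrest : ∀ v a b, (G.deleteEdges (⋃ i, E i)).Adj v a →
      (G.deleteEdges (⋃ i, E i)).Adj v b → a = b) :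
    pmd G ≤ Fintype.card ι + 1 := by
  set H := G.deleteEdges (⋃ i, E i)
  set e := Fintype.equivFin ι
  let F : Fin (Fintype.card ι + 1) → Set (Sym2 V) :=
    Fin.lastCases H.edgeSet fun j => E (e.symm j)
  have hE : ∀ i, E i ⊆ G.edgeSet := fun i => (hpos i).1
  have hF : ∀ i j, i ≠ j → Disjoint (F i) (F j) := by
    have hdisj_rest : ∀ j, Disjoint (E (e.symm j)) H.edgeSet := fun j => by
      rw [edgeSet_deleteEdges]
      exact Set.disjoint_sdiff_right.mono_left (Set.subset_iUnion E _)
    intro i j hij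
    cases i using Fin.lastCases <;> cases j using Fin.lastCases <;>
      simp only [F, Fin.lastCases_last, Fin.lastCases_castSucc]
    · exact (hij rfl).elim
    · exact (hdisj_rest _).symm
    · exact hdisj_rest _
    · exact hdisj (e.symm.injective.ne fun h => hij (congrArg _ h))
  have hbefore_last : (⋃ j, ⋃ (_ : j < Fin.last _), F j) = ⋃ i, E i := by
    ext x
    simp [F, Fin.exists_fin_succ', Fin.castSucc_lt_last, e.symm.exists_congr_left]
  refine Nat.sInf_le ⟨F, hF, ?_, fun i => ?_⟩
  · ext x
    simp only [Set.mem_iUnion, Fin.exists_fin_succ', F, Fin.lastCases_castSucc,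
      Fin.lastCases_last, e.symm.exists_congr_left, Equiv.symm_symm, e.symm_apply_apply]
    rw [← Set.mem_iUnion, ← Set.mem_union, edgeSet_deleteEdges,
      Set.union_sdiff_cancel (Set.iUnion_subset hE)]
  · cases i using Fin.lastCases with
    | last =>
      simp only [F, Fin.lastCases_last, hbefore_last]
      simpa using isPositiveMatching_edgeSet_inter_sym2 (G := H) (S := Set.univ)
        fun v _ a _ b _ => hrest v a b
    | cast j =>
      have hFj : F j.castSucc = E (e.symm j) := by simp [F]
      rw [hFj]
      refine (hpos _).mono (deleteEdges_le _) fun x hx => ?_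
      rw [edgeSet_deleteEdges]
      refine ⟨hE _ hx, fun hmem => ?_⟩
      obtain ⟨j', hj', hxj'⟩ := Set.mem_iUnion₂.1 hmem
      exact Set.disjoint_left.1 (hF _ _ hj'.ne) hxj' (hFj ▸ hx)

namespace Hypercube

variable {n : ℕ}

def parity (i : Fin n) (a : Fin n → Fin 2) : Fin 2 :=
  ∑ j, a j - a i

theorem adj_iff {u v : Fin n → Fin 2} :
    (hypercube n).Adj u v ↔ ∃ i, v = u + Pi.single i 1 := by
  have hflip : ∀ x y : Fin 2, x ≠ y ↔ y = x + 1 := by decide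
  refine exists_congr fun i => ?_
  change (u i ≠ v i ∧ ∀ j, j ≠ i → u j = v j) ↔ _
  rw [funext_iff, hflip]
  constructor
  · rintro ⟨hi, hj⟩ j
    by_cases h : j = i
    · subst h
      simpa using hi
    · simp [Pi.single_eq_of_ne h, hj j h]
  · intro h
    exact ⟨by simpa using h i, fun j hj => by simp [h j, Pi.single_eq_of_ne hj]⟩

theorem parity_add_single_eq_iff {i k : Fin n} {u : Fin n → Fin 2} :
    parity i (u + Pi.single k 1) = parity i u ↔ k = i := by
  have hsum : parity i (u + Pi.single k 1) =
      parity i u + (1 - (Pi.single k 1 : Fin n → Fin 2) i) := by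
    simp only [parity, Pi.add_apply, Finset.sum_add_distrib, Finset.sum_pi_single',
      Finset.mem_univ, if_true]
    exact add_sub_add_comm _ _ _ _
  rw [hsum, add_eq_left, sub_eq_zero, Pi.single_apply]
  split_ifs with h <;> simp [h, eq_comm]

theorem eq_add_single_of_adj_of_parity_eq {i : Fin n} {u v : Fin n → Fin 2}
    (huv : (hypercube n).Adj u v) (h : parity i u = parity i v) : v = u + Pi.single i 1 := by
  obtain ⟨k, rfl⟩ := adj_iff.1 huv
  rw [parity_add_single_eq_iff.1 h.symm]

def parityClass (i : Fin n) (p : Fin 2) : Set (Sym2 (Fin n → Fin 2)) :=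
  (hypercube n).edgeSet ∩ {a | parity i a = p}.sym2

theorem mk_mem_parityClass {i : Fin n} {p : Fin 2} {u v : Fin n → Fin 2} :
    s(u, v) ∈ parityClass i p ↔ (hypercube n).Adj u v ∧ parity i u = p ∧ parity i v = p :=
  Iff.rfl

theorem isPositiveMatching_parityClass (i : Fin n) (p : Fin 2) :
    IsPositiveMatching (hypercube n) (parityClass i p) :=
  isPositiveMatching_edgeSet_inter_sym2 fun _ hv _ ha _ hb hva hvb =>
    (eq_add_single_of_adj_of_parity_eq hva (hv.trans ha.symm)).trans
      (eq_add_single_of_adj_of_parity_eq hvb (hv.trans hb.symm)).symm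

theorem disjoint_parityClass {i j : Fin n} {p q : Fin 2} (h : (i, p) ≠ (j, q)) :
    Disjoint (parityClass i p) (parityClass j q) := by
  refine Set.disjoint_left.2 fun e he hf => ?_
  induction e using Sym2.ind with
  | _ u v =>
    obtain ⟨huv, hu, hv⟩ := mk_mem_parityClass.1 he
    obtain ⟨-, hu', hv'⟩ := mk_mem_parityClass.1 hf
    have hij : i = j := by
      rw [eq_add_single_of_adj_of_parity_eq huv (hu.trans hv.symm)] at hv'
      exact parity_add_single_eq_iff.1 (hv'.trans hu'.symm)
    subst hij
    exact h (by rw [← hu, ← hu'])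

theorem eq_add_single_last_of_adj_deleteEdges {k : ℕ} {v a : Fin (k + 1) → Fin 2}
    (h : ((hypercube (k + 1)).deleteEdges
      (⋃ ip : Fin k × Fin 2, parityClass ip.1.castSucc ip.2)).Adj v a) :
    a = v + Pi.single (Fin.last k) 1 := by
  rw [deleteEdges_adj] at h
  obtain ⟨d, rfl⟩ := adj_iff.1 h.1
  cases d using Fin.lastCases with
  | last => rfl
  | cast i =>
    exact absurd (Set.mem_iUnion.2 ⟨(i, parity i.castSucc v),
      mk_mem_parityClass.2 ⟨h.1, rfl, parity_add_single_eq_iff.2 rfl⟩⟩) h.2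

end Hypercube

open Hypercube in
/-- `pmd(Qₙ) ≤ 2n - 1` for `n ≥ 1`. -/
theorem pmd_hypercube_le (n : ℕ) (hn : 1 ≤ n) : pmd (hypercube n) ≤ 2 * n - 1 := by
  obtain ⟨k, rfl⟩ : ∃ k, n = k + 1 := ⟨n - 1, by omega⟩
  have h := pmd_le_card_add_one (fun ip : Fin k × Fin 2 => parityClass ip.1.castSucc ip.2)
    (fun _ => isPositiveMatching_parityClass _ _)
    (fun _ _ hne => disjoint_parityClass fun h => hne (Prod.ext_iff.2 (by simpa using h)))
    fun _ _ _ ha hb => (eq_add_single_last_of_adj_deleteEdges ha).trans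
      (eq_add_single_last_of_adj_deleteEdges hb).symm
  simp only [Fintype.card_prod, Fintype.card_fin] at h
  omega
end

section
/- If T is a tree with at least one edge, then pmd(T) equals the maximum degree Δ(T). -/
/-!
Every edge set `M` of a tree is cut out by a vertex weighting: root the tree at `r` and put
`w v = ±1 - w (parent v)`, with the sign `+` iff the edge from `v` to its parent lies in `M`.
The same weighting works in every subgraph, so in a tree a positive matching decomposition is
nothing but a proper edge colouring, and trees are `Δ`-edge-colourable: the edge from `v` up to
`u` gets the index of `v` among the neighbours of `u`, except that the child whose index equals
the colour of the edge above `u` takes the index of the parent of `u` instead. Conversely, the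
edges at a vertex of maximum degree lie in pairwise distinct parts.
-/

open SimpleGraph

variable {V : Type*}

namespace SimpleGraph

variable {G : SimpleGraph V} {r u v w x : V}

variable (G) in
open Classical in
noncomputable def parent (r v : V) : V :=
  if h : ∃ u, G.Adj v u ∧ G.dist r u + 1 = G.dist r v then h.choose else v

lemma parent_root : G.parent r r = r := by
  simp [parent]

lemma Connected.exists_adj_dist_add_one (hG : G.Connected) (hv : v ≠ r) :
    ∃ u, G.Adj v u ∧ G.dist r u + 1 = G.dist r v := by
  obtain ⟨p, -, hp⟩ := hG.exists_path_of_dist v r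
  cases p with
  | nil => exact absurd rfl hv
  | @cons _ u _ hadj q =>
    refine ⟨u, hadj, ?_⟩
    have hq := dist_le q
    have htri : G.dist v r ≤ G.dist v u + G.dist u r := hG.dist_triangle
    rw [dist_eq_one_iff_adj.mpr hadj] at htri
    rw [Walk.length_cons] at hp
    rw [dist_comm (u := r), dist_comm (u := r)]
    omega

lemma Connected.adj_parent (hG : G.Connected) (hv : v ≠ r) : G.Adj v (G.parent r v) := by
  rw [parent, dif_pos (hG.exists_adj_dist_add_one hv)]
  exact (hG.exists_adj_dist_add_one hv).choose_spec.1

lemma Connected.dist_parent_add_one (hG : G.Connected) (hv : v ≠ r) :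
    G.dist r (G.parent r v) + 1 = G.dist r v := by
  rw [parent, dif_pos (hG.exists_adj_dist_add_one hv)]
  exact (hG.exists_adj_dist_add_one hv).choose_spec.2

lemma Connected.parent_parent_ne (hG : G.Connected) (hv : v ≠ r) :
    G.parent r (G.parent r v) ≠ v := by
  by_cases hu : G.parent r v = r
  · rw [hu, parent_root]
    exact hv.symm
  · intro h
    have h₁ := hG.dist_parent_add_one hv
    have h₂ := hG.dist_parent_add_one hu
    rw [h] at h₂
    omega

variable (G) in
noncomputable def parentRec {β : Type*} (r : V) (b : β) (f : V → β → β) (v : V) : β :=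
  if G.dist r (G.parent r v) < G.dist r v then f v (parentRec r b f (G.parent r v)) else b
termination_by G.dist r v

lemma parentRec_root {β : Type*} (b : β) (f : V → β → β) : G.parentRec r b f r = b := by
  rw [parentRec, if_neg (by simp [parent_root])]

lemma Connected.parentRec_of_ne (hG : G.Connected) {β : Type*} (b : β) (f : V → β → β)
    (hv : v ≠ r) : G.parentRec r b f v = f v (G.parentRec r b f (G.parent r v)) := by
  rw [parentRec, if_pos (by have := hG.dist_parent_add_one hv; omega)]

lemma IsTree.parent_eq_of_adj (hG : G.IsTree) (hadj : G.Adj v u)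
    (h : G.dist r u + 1 = G.dist r v) : G.parent r v = u := by
  have hv : v ≠ r := by
    rintro rfl
    simp at h
  have hp := hG.connected.adj_parent hv
  have hpd := hG.connected.dist_parent_add_one hv
  obtain ⟨P, -, hP⟩ := hG.connected.exists_path_of_dist u r
  obtain ⟨Q, -, hQ⟩ := hG.connected.exists_path_of_dist (G.parent r v) r
  have hPpath : (Walk.cons hadj P).IsPath := by
    refine Walk.isPath_of_length_eq_dist _ ?_
    rw [Walk.length_cons, hP, dist_comm, h, dist_comm]
  have hQpath : (Walk.cons hp Q).IsPath := by
    refine Walk.isPath_of_length_eq_dist _ ?_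
    rw [Walk.length_cons, hQ, dist_comm, hpd, dist_comm]
  have := (hG.existsUnique_path v r).unique hQpath hPpath
  simpa using congrArg Walk.snd this

lemma IsTree.parent_eq_or_parent_eq (hG : G.IsTree) (r : V) (hadj : G.Adj u v) :
    (v ≠ r ∧ G.parent r v = u) ∨ (u ≠ r ∧ G.parent r u = v) := by
  rcases hG.dist_eq_dist_add_one_of_adj r hadj with h | h
  · refine .inr ⟨?_, hG.parent_eq_of_adj hadj h.symm⟩
    rintro rfl
    simp at h
  · refine .inl ⟨?_, hG.parent_eq_of_adj hadj.symm h.symm⟩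
    rintro rfl
    simp at h

lemma IsTree.exists_eq_parent_edge (hG : G.IsTree) (r : V) {e : Sym2 V} (he : e ∈ G.edgeSet) :
    ∃ v, v ≠ r ∧ e = s(G.parent r v, v) := by
  induction e using Sym2.ind with
  | h u v =>
    rw [mem_edgeSet] at he
    rcases hG.parent_eq_or_parent_eq r he with ⟨hv, rfl⟩ | ⟨hu, rfl⟩
    · exact ⟨v, hv, rfl⟩
    · exact ⟨u, hu, Sym2.eq_swap⟩

theorem IsTree.exists_weight (hG : G.IsTree) (M : Set (Sym2 V)) :
    ∃ w : V → ℝ, ∀ u v, G.Adj u v → (0 < w u + w v ↔ s(u, v) ∈ M) := by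
  classical
  obtain ⟨r⟩ := hG.connected.nonempty
  set w := G.parentRec r (0 : ℝ) fun v x ↦ (if s(G.parent r v, v) ∈ M then 1 else -1) - x
  have hparent (v : V) (hv : v ≠ r) :
      0 < w (G.parent r v) + w v ↔ s(G.parent r v, v) ∈ M := by
    simp only [w, hG.connected.parentRec_of_ne _ _ hv]
    split_ifs <;> norm_num [*]
  refine ⟨w, fun u v huv ↦ ?_⟩
  rcases hG.parent_eq_or_parent_eq r huv with ⟨hv, rfl⟩ | ⟨hu, rfl⟩
  · exact hparent v hv
  · rw [add_comm, Sym2.eq_swap]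
    exact hparent u hu

variable (G) in
open Classical in
noncomputable def neighborIndex [G.LocallyFinite] (u v : V) : ℕ :=
  if h : G.Adj u v then Fintype.equivFin (G.neighborSet u) ⟨v, h⟩ else 0

section LocallyFinite

variable [G.LocallyFinite]

lemma neighborIndex_lt (h : G.Adj u v) : G.neighborIndex u v < G.degree u := by
  rw [neighborIndex, dif_pos h, ← card_neighborSet_eq_degree]
  exact Fin.isLt _

lemma neighborIndex_inj (hv : G.Adj u v) (hw : G.Adj u w) :
    G.neighborIndex u v = G.neighborIndex u w ↔ v = w := by
  rw [neighborIndex, neighborIndex, dif_pos hv, dif_pos hw, Fin.val_inj,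
    (Fintype.equivFin _).apply_eq_iff_eq]
  exact Subtype.mk_eq_mk

variable (G) in
/-- The value `degree r` at the root is an index no neighbour of `r` has, so the children of `r`
keep their own index. -/
noncomputable def parentEdgeColor (r : V) : V → ℕ :=
  G.parentRec r (G.degree r) fun v c ↦
    G.neighborIndex (G.parent r v)
      (if G.neighborIndex (G.parent r v) v = c then G.parent r (G.parent r v) else v)

lemma Connected.parentEdgeColor_of_parent_eq (hG : G.Connected) (hv : v ≠ r)
    (hu : G.parent r v = u) :
    G.parentEdgeColor r v = G.neighborIndex u
      (if G.neighborIndex u v = G.parentEdgeColor r u then G.parent r u else v) := by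
  subst hu
  exact hG.parentRec_of_ne _ _ hv

lemma Connected.adj_parent_of_neighborIndex_eq (hG : G.Connected) (hv : v ≠ r)
    (hu : G.parent r v = u) (h : G.neighborIndex u v = G.parentEdgeColor r u) :
    G.Adj u (G.parent r u) := by
  by_cases hur : u = r
  · subst hur
    rw [parentEdgeColor, parentRec_root] at h
    exact absurd h (neighborIndex_lt (hu ▸ (hG.adj_parent hv).symm)).ne
  · exact hG.adj_parent hur

lemma Connected.parentEdgeColor_lt (hG : G.Connected) (hv : v ≠ r) :
    G.parentEdgeColor r v < G.degree (G.parent r v) := by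
  rw [hG.parentEdgeColor_of_parent_eq hv rfl]
  split_ifs with h
  · exact neighborIndex_lt (hG.adj_parent_of_neighborIndex_eq hv rfl h)
  · exact neighborIndex_lt (hG.adj_parent hv).symm

lemma Connected.parentEdgeColor_ne_parent (hG : G.Connected) (hv : v ≠ r)
    (hu : G.parent r v = u) (hur : u ≠ r) :
    G.parentEdgeColor r v ≠ G.parentEdgeColor r u := by
  rw [hG.parentEdgeColor_of_parent_eq hv hu]
  split_ifs with h
  · rw [← h, Ne, neighborIndex_inj (hG.adj_parent hur) (hu ▸ hG.adj_parent hv).symm, ← hu]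
    exact hG.parent_parent_ne hv
  · exact h

lemma Connected.parentEdgeColor_ne_sibling (hG : G.Connected) (hv : v ≠ r) (hw : w ≠ r)
    (hvw : v ≠ w) (hvu : G.parent r v = u) (hwu : G.parent r w = u) :
    G.parentEdgeColor r v ≠ G.parentEdgeColor r w := by
  have hadjv : G.Adj u v := hvu ▸ (hG.adj_parent hv).symm
  have hadjw : G.Adj u w := hwu ▸ (hG.adj_parent hw).symm
  have hvw' := (neighborIndex_inj hadjv hadjw).not.mpr hvw
  rw [hG.parentEdgeColor_of_parent_eq hv hvu, hG.parentEdgeColor_of_parent_eq hw hwu]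
  split_ifs with hv' hw' hw'
  · exact absurd (hv'.trans hw'.symm) hvw'
  · rw [Ne, neighborIndex_inj (hG.adj_parent_of_neighborIndex_eq hv hvu hv') hadjw, ← hwu]
    exact hG.parent_parent_ne hw
  · rw [Ne, neighborIndex_inj hadjv (hG.adj_parent_of_neighborIndex_eq hw hwu hw'), ← hvu]
    exact (hG.parent_parent_ne hv).symm
  · exact hvw'

lemma Connected.parentEdgeColor_ne_of_mem (hG : G.Connected) (hv : v ≠ r) (hw : w ≠ r)
    (hvw : v ≠ w) (hxv : x ∈ s(G.parent r v, v)) (hxw : x ∈ s(G.parent r w, w)) :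
    G.parentEdgeColor r v ≠ G.parentEdgeColor r w := by
  rw [Sym2.mem_iff] at hxv hxw
  rcases hxv with hxv | rfl <;> rcases hxw with hxw | hxw
  · exact hG.parentEdgeColor_ne_sibling hv hw hvw hxv.symm hxw.symm
  · exact hG.parentEdgeColor_ne_parent hv (hxv.symm.trans hxw) (hxw ▸ hw)
  · exact (hG.parentEdgeColor_ne_parent hw hxw.symm hv).symm
  · exact absurd hxw hvw

end LocallyFinite

theorem IsTree.lineGraph_colorable [Fintype V] [DecidableRel G.Adj] (hG : G.IsTree) :
    G.lineGraph.Colorable G.maxDegree := by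
  obtain ⟨r⟩ := hG.connected.nonempty
  choose child hchild hedge using fun e : G.edgeSet ↦ hG.exists_eq_parent_edge r e.2
  refine (colorable_iff_exists_bdd_nat_coloring _).mpr
    ⟨Coloring.mk (fun e ↦ G.parentEdgeColor r (child e)) fun {e f} hef ↦ ?_, fun e ↦ ?_⟩
  · obtain ⟨hne, x, hxe, hxf⟩ := lineGraph_adj_iff_exists.mp hef
    rw [hedge e] at hxe
    rw [hedge f] at hxf
    refine hG.connected.parentEdgeColor_ne_of_mem (hchild e) (hchild f) (fun h ↦ hne ?_) hxe hxf
    rw [Subtype.ext_iff, hedge e, hedge f, h]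
  · exact (hG.connected.parentEdgeColor_lt (hchild e)).trans_le (G.degree_le_maxDegree _)

end SimpleGraph

variable {G : SimpleGraph V} {M : Set (Sym2 V)} {p k : ℕ} {E : Fin p → Set (Sym2 V)}

lemma IsPositiveMatching.eq_of_mem_of_mem (hM : IsPositiveMatching G M) {e f : Sym2 V} {x : V}
    (he : e ∈ M) (hf : f ∈ M) (hxe : x ∈ e) (hxf : x ∈ f) : e = f :=
  by_contra fun hne ↦ hM.2.1 e he f hf hne x hxe hxf

lemma IsPMD.degree_le (hE : IsPMD G E) (x : V) [Fintype (G.neighborSet x)] :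
    G.degree x ≤ p := by
  have hcover (y : G.neighborSet x) : ∃ i, s(x, y) ∈ E i := by
    rw [← Set.mem_iUnion, hE.2.1]
    exact y.2
  choose part hpart using hcover
  have hinj : Function.Injective part := fun y z hyz ↦ Subtype.ext <| Sym2.congr_right.mp <|
    (hE.2.2 (part y)).eq_of_mem_of_mem (hpart y) (hyz ▸ hpart z)
      (Sym2.mem_mk_left x y) (Sym2.mem_mk_left x z)
  calc G.degree x = Fintype.card (G.neighborSet x) := (card_neighborSet_eq_degree G x).symm
    _ ≤ Fintype.card (Fin p) := Fintype.card_le_of_injective part hinj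
    _ = p := Fintype.card_fin p

lemma IsPMD.maxDegree_le [Fintype V] [DecidableRel G.Adj] (hE : IsPMD G E) : G.maxDegree ≤ p :=
  G.maxDegree_le_of_forall_degree_le p fun x ↦ hE.degree_le x

lemma isPMD_colorClasses (C : G.lineGraph.Coloring (Fin k))
    (hw : ∀ M : Set (Sym2 V),
      ∃ w : V → ℝ, ∀ u v, G.Adj u v → (0 < w u + w v ↔ s(u, v) ∈ M)) :
    IsPMD G fun i ↦ Subtype.val '' C.colorClass i := by
  have hdisj (i j : Fin k) (hij : i ≠ j) :
      Disjoint (Subtype.val '' C.colorClass i) (Subtype.val '' C.colorClass j) := by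
    rw [Set.disjoint_image_iff Subtype.val_injective, Set.disjoint_left]
    exact fun e hi hj ↦ hij (hi.symm.trans hj)
  refine ⟨hdisj, ?_, fun i ↦ ⟨?_, ?_, ?_⟩⟩
  · rw [← Set.image_iUnion, Set.iUnion_eq_univ_iff.mpr fun e ↦ ⟨C e, rfl⟩, Set.image_univ,
      Subtype.range_coe]
  · rintro _ ⟨e, hi, rfl⟩
    rw [edgeSet_deleteEdges]
    refine ⟨e.2, fun hmem ↦ ?_⟩
    obtain ⟨j, hj⟩ := Set.mem_iUnion.mp hmem
    obtain ⟨hji, hj⟩ := Set.mem_iUnion.mp hj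
    exact Set.disjoint_left.mp (hdisj j i hji.ne) hj ⟨e, hi, rfl⟩
  · rintro _ ⟨e, he, rfl⟩ _ ⟨f, hf, rfl⟩ hne x hxe hxf
    have hef : G.lineGraph.Adj e f :=
      lineGraph_adj_iff_exists.mpr ⟨fun h ↦ hne (congrArg Subtype.val h), x, hxe, hxf⟩
    exact C.valid hef (he.trans hf.symm)
  · obtain ⟨w, hw⟩ := hw (Subtype.val '' C.colorClass i)
    exact ⟨w, fun u v huv ↦ hw u v (deleteEdges_adj.mp huv).1⟩

theorem pmd_tree_general [Fintype V] (T : SimpleGraph V) [DecidableRel T.Adj]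
    (hT : T.IsTree) : pmd T = T.maxDegree := by
  obtain ⟨C⟩ := hT.lineGraph_colorable
  have hmem : T.maxDegree ∈ {p : ℕ | ∃ E : Fin p → Set (Sym2 V), IsPMD T E} :=
    ⟨_, isPMD_colorClasses C hT.exists_weight⟩
  refine le_antisymm (Nat.sInf_le hmem) ?_
  obtain ⟨E, hE⟩ := Nat.sInf_mem ⟨_, hmem⟩
  exact hE.maxDegree_le

/-- If `T` is a tree with at least one edge, then `pmd(T) = Δ(T)`. -/
theorem pmd_tree [Fintype V] [DecidableEq V] (T : SimpleGraph V) [DecidableRel T.Adj]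
    (hT : T.IsTree) (he : T.edgeSet.Nonempty) : pmd T = T.maxDegree :=
  pmd_tree_general T hT
end

section
/- Let n ≥ m ≥ 1 and let the multiset n∗[m] (each element of {1,…,m} taken with multiplicity n) be partitioned into sets X₁, …, X_k (each X_i a subset of [m]). Then there exists an m×n array with entries from {1,…,k}, no entry repeated in any row or in any column, such that for each i, the set of rows in which the symbol i appears is exactly X_i. -/
open Finset

/-- Contingency table: given margins with equal total sum, a matrix with those margins exists. -/
lemma exists_contingency {α β : Type*} [Fintype α] [Fintype β] [DecidableEq α] [DecidableEq β]
    (T : ℕ) : ∀ (a : α → ℕ) (b : β → ℕ), (∑ x, a x = T) → (∑ y, b y = T) →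
    ∃ M : α → β → ℕ, (∀ x, ∑ y, M x y = a x) ∧ (∀ y, ∑ x, M x y = b y) := by
  induction T with
  | zero =>
    intro a b ha hb
    refine ⟨fun _ _ => 0, fun x => ?_, fun y => ?_⟩
    · simpa using (Finset.sum_eq_zero_iff.mp ha x (mem_univ x)).symm
    · simpa using (Finset.sum_eq_zero_iff.mp hb y (mem_univ y)).symm
  | succ T ih =>
    intro a b ha hb
    obtain ⟨x₀, -, hx₀⟩ := Finset.exists_ne_zero_of_sum_ne_zero (by omega : ∑ x, a x ≠ 0)
    obtain ⟨y₀, -, hy₀⟩ := Finset.exists_ne_zero_of_sum_ne_zero (by omega : ∑ y, b y ≠ 0)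
    have hax : a x₀ = (a x₀ - 1) + 1 := by omega
    have hby : b y₀ = (b y₀ - 1) + 1 := by omega
    have ha' : ∑ x, Function.update a x₀ (a x₀ - 1) x = T := by
      rw [Finset.sum_update_of_mem (mem_univ x₀), Finset.sdiff_singleton_eq_erase]
      rw [← Finset.add_sum_erase _ a (mem_univ x₀), hax] at ha
      omega
    have hb' : ∑ y, Function.update b y₀ (b y₀ - 1) y = T := by
      rw [Finset.sum_update_of_mem (mem_univ y₀), Finset.sdiff_singleton_eq_erase]
      rw [← Finset.add_sum_erase _ b (mem_univ y₀), hby] at hb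
      omega
    obtain ⟨M, hMr, hMc⟩ := ih _ _ ha' hb'
    refine ⟨fun x y => M x y + if x = x₀ then (if y = y₀ then 1 else 0) else 0,
      fun x => ?_, fun y => ?_⟩
    · rw [Finset.sum_add_distrib, hMr]
      rcases eq_or_ne x x₀ with rfl | hx
      · simp [Function.update_self]; omega
      · simp [hx, Function.update_of_ne hx]
    · rw [Finset.sum_add_distrib, hMc]
      rcases eq_or_ne y y₀ with rfl | hy
      · simp [Function.update_self, Finset.sum_ite_eq']; omega
      · simp [hy, Function.update_of_ne hy]

/-- From a matrix with constant row sums `t` and column sums `≤ t`, extract an injective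
system of positive entries (Hall's theorem). -/
lemma exists_inj_pos {R S : Type*} [Fintype R] [Fintype S] [DecidableEq R] [DecidableEq S]
    (t : ℕ) (ht : 0 < t) (N : R → S → ℕ)
    (hr : ∀ r, ∑ i, N r i = t) (hc : ∀ i, ∑ r, N r i ≤ t) :
    ∃ f : R → S, Function.Injective f ∧ ∀ r, 0 < N r (f r) := by
  have := (Finset.all_card_le_biUnion_card_iff_exists_injective
    (fun r : R => univ.filter fun i => 0 < N r i)).mp ?_
  · obtain ⟨f, hf, hmem⟩ := this
    exact ⟨f, hf, fun r => (mem_filter.mp (hmem r)).2⟩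
  intro s
  set B := s.biUnion fun r => univ.filter fun i => 0 < N r i with hB
  have key : t * s.card ≤ t * B.card := by
    calc t * s.card = ∑ r ∈ s, ∑ i, N r i := by
          rw [Finset.sum_congr rfl fun r _ => hr r, Finset.sum_const, smul_eq_mul, mul_comm]
      _ = ∑ r ∈ s, ∑ i ∈ B, N r i := by
          refine Finset.sum_congr rfl fun r hrs => (Finset.sum_subset (subset_univ B) ?_).symm
          intro i _ hiB
          by_contra hpos
          exact hiB (Finset.mem_biUnion.mpr ⟨r, hrs, mem_filter.mpr ⟨mem_univ i,
            Nat.pos_of_ne_zero hpos⟩⟩)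
      _ = ∑ i ∈ B, ∑ r ∈ s, N r i := Finset.sum_comm
      _ ≤ ∑ i ∈ B, t := Finset.sum_le_sum fun i _ =>
          le_trans (Finset.sum_le_sum_of_subset (subset_univ s)) (hc i)
      _ = t * B.card := by rw [Finset.sum_const, smul_eq_mul, mul_comm]
  exact Nat.le_of_mul_le_mul_left key ht

/-- Decompose a matrix with all row and column sums `t` into `t` injections. -/
lemma exists_decomp {R S : Type*} [Fintype R] [Fintype S] [DecidableEq R] [DecidableEq S]
    (hcard : Fintype.card R = Fintype.card S) :
    ∀ (t : ℕ) (N : R → S → ℕ), (∀ r, ∑ i, N r i = t) → (∀ i, ∑ r, N r i = t) →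
    ∃ σ : Fin t → (R → S), (∀ c, Function.Injective (σ c)) ∧
      ∀ r i, N r i = ∑ c, if σ c r = i then 1 else 0 := by
  intro t
  induction t with
  | zero =>
    intro N hr _
    refine ⟨fun c => c.elim0, fun c => c.elim0, fun r i => ?_⟩
    have := Finset.sum_eq_zero_iff.mp (hr r) i (mem_univ i)
    simp [this]
  | succ t ih =>
    intro N hr hc
    obtain ⟨f, hfinj, hfpos⟩ := exists_inj_pos (t + 1) (Nat.succ_pos t) N hr
      (fun i => le_of_eq (hc i))
    have hfbij : Function.Bijective f :=
      (Fintype.bijective_iff_injective_and_card f).mpr ⟨hfinj, hcard⟩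
    set e := Equiv.ofBijective f hfbij with he
    set N' : R → S → ℕ := fun r i => N r i - if f r = i then 1 else 0 with hN'
    have hptwise : ∀ r i, N r i = N' r i + if f r = i then 1 else 0 := by
      intro r i
      rcases eq_or_ne (f r) i with rfl | hne
      · have := hfpos r; simp [hN']; omega
      · simp [hN', hne]
    have hsum_ind_row : ∀ r, (∑ i, if f r = i then 1 else 0) = 1 := by
      intro r; simp [Finset.sum_ite_eq]
    have hsum_ind_col : ∀ i, (∑ r, if f r = i then 1 else 0) = 1 := by
      intro r
      have hx : ∀ x : R, (f x = r) ↔ (x = e.symm r) := fun x => by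
        rw [he, Equiv.eq_symm_apply, Equiv.ofBijective_apply]
      simp only [hx]
      simp [Finset.sum_ite_eq']
    have hr' : ∀ r, ∑ i, N' r i = t := by
      intro r
      have h1 : ∑ i, N r i = (∑ i, N' r i) + ∑ i, (if f r = i then 1 else 0) := by
        rw [← Finset.sum_add_distrib]; exact Finset.sum_congr rfl fun i _ => hptwise r i
      rw [hr r] at h1; rw [hsum_ind_row r] at h1; omega
    have hc' : ∀ i, ∑ r, N' r i = t := by
      intro i
      have h1 : ∑ r, N r i = (∑ r, N' r i) + ∑ r, (if f r = i then 1 else 0) := by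
        rw [← Finset.sum_add_distrib]; exact Finset.sum_congr rfl fun r _ => hptwise r i
      rw [hc i] at h1; rw [hsum_ind_col i] at h1; omega
    obtain ⟨σ', hσ'inj, hσ'⟩ := ih N' hr' hc'
    refine ⟨Fin.cons f σ', fun c => ?_, fun r i => ?_⟩
    · refine Fin.cases ?_ ?_ c
      · simpa using hfinj
      · intro c'; simpa using hσ'inj c'
    · rw [Fin.sum_univ_succ]
      simp only [Fin.cons_zero, Fin.cons_succ]
      rw [hptwise r i, hσ' r i]; omega

/-- Given `n ≥ m ≥ 1` and a partition of the multiset `n∗[m]` into subsets `X₁, …, X_k` of `[m]`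
(each `j ∈ [m]` belongs to exactly `n` of the sets), there is a generalized `m × n` Latin
rectangle with entries in `{1, …, k}` — no entry repeated in any row or column — such that for
each `i`, the set of rows in which the symbol `i` appears is exactly `Xᵢ`. -/
theorem exists_generalized_latin_rectangle (m n k : ℕ) (hm : 1 ≤ m) (hmn : m ≤ n)
    (X : Fin k → Finset (Fin m))
    (hpart : ∀ j : Fin m, (Finset.univ.filter fun i => j ∈ X i).card = n) :
    ∃ A : Fin m → Fin n → Fin k,
      (∀ r : Fin m, Function.Injective (A r)) ∧
      (∀ c : Fin n, Function.Injective fun r => A r c) ∧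
      (∀ i : Fin k, ∀ r : Fin m, (∃ c, A r c = i) ↔ r ∈ X i) := by
  classical
  -- basic counting facts
  have hcardX : ∀ i, (X i).card ≤ n := fun i =>
    le_trans (le_trans (Finset.card_le_univ _) (by simp)) hmn
  have hXsum : ∑ i, (X i).card = n * m := by
    have h1 : ∀ i : Fin k, (X i).card = ∑ r : Fin m, (if r ∈ X i then 1 else 0) := by
      intro i
      rw [Finset.sum_ite_mem, Finset.univ_inter, Finset.sum_const, smul_eq_mul, mul_one]
    calc ∑ i, (X i).card = ∑ i : Fin k, ∑ r : Fin m, (if r ∈ X i then 1 else 0) :=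
          Finset.sum_congr rfl fun i _ => h1 i
      _ = ∑ r : Fin m, ∑ i : Fin k, (if r ∈ X i then 1 else 0) := Finset.sum_comm
      _ = ∑ r : Fin m, n := Finset.sum_congr rfl fun r _ => by
          rw [← hpart r, Finset.card_filter]
      _ = n * m := by simp [mul_comm]
  have hnk : n ≤ k := by
    have h2 : ∑ i, (X i).card ≤ k * m := by
      calc ∑ i, (X i).card ≤ ∑ _i : Fin k, m :=
            Finset.sum_le_sum fun i _ => le_trans (Finset.card_le_univ _) (by simp)
        _ = k * m := by simp [mul_comm]
    rw [hXsum] at h2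
    exact Nat.le_of_mul_le_mul_right h2 hm
  have hmk : m ≤ k := le_trans hmn hnk
  -- dummy-row matrix from contingency lemma
  have hbsum : ∑ i : Fin k, (n - (X i).card) = (k - m) * n := by
    have h3 : ∑ i : Fin k, (n - (X i).card) = n * k - ∑ i, (X i).card := by
      rw [eq_tsub_iff_add_eq_of_le, ← Finset.sum_add_distrib]
      · calc ∑ i : Fin k, (n - (X i).card + (X i).card) = ∑ _i : Fin k, n :=
            Finset.sum_congr rfl fun i _ => by have := hcardX i; omega
          _ = n * k := by simp [mul_comm]
      · calc ∑ i, (X i).card ≤ ∑ _i : Fin k, n := Finset.sum_le_sum fun i _ => hcardX i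
          _ = n * k := by simp [mul_comm]
    rw [h3, hXsum, Nat.sub_mul, Nat.mul_comm k n, Nat.mul_comm m n]
  obtain ⟨D, hDr, hDc⟩ := exists_contingency ((k - m) * n)
    (fun _ : Fin (k - m) => n) (fun i : Fin k => n - (X i).card)
    (by simp [mul_comm]) hbsum
  · -- the padded square matrix
    set N : (Fin m ⊕ Fin (k - m)) → Fin k → ℕ :=
      fun x i => Sum.elim (fun r => if r ∈ X i then 1 else 0) (fun s => D s i) x with hN
    have hrow : ∀ x, ∑ i, N x i = n := by
      rintro (r | s)
      · simp only [hN, Sum.elim_inl]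
        rw [← Finset.card_filter]
        exact hpart r
      · simpa [hN] using hDr s
    have hcol : ∀ i, ∑ x, N x i = n := by
      intro i
      rw [Fintype.sum_sum_type]
      have h1 : ∑ r : Fin m, N (Sum.inl r) i = (X i).card := by
        simp only [hN, Sum.elim_inl]
        rw [Finset.sum_ite_mem, Finset.univ_inter, Finset.sum_const, smul_eq_mul, mul_one]
      have h2 : ∑ s : Fin (k - m), N (Sum.inr s) i = n - (X i).card := by
        simpa [hN] using hDc i
      rw [h1, h2]
      have := hcardX i; omega
    obtain ⟨σ, hσinj, hσcount⟩ := exists_decomp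
      (by simp [Fintype.card_sum]; omega : Fintype.card (Fin m ⊕ Fin (k - m)) = Fintype.card (Fin k))
      n N hrow hcol
    refine ⟨fun r c => σ c (Sum.inl r), ?_, ?_, ?_⟩
    · -- row injectivity
      intro r c c' hcc
      by_contra hne
      set i := σ c (Sum.inl r) with hi
      have hle1 : N (Sum.inl r) i ≤ 1 := by simp only [hN, Sum.elim_inl]; split <;> omega
      have h2le : 2 ≤ ∑ c'', if σ c'' (Sum.inl r) = i then 1 else 0 := by
        have hsub : ({c, c'} : Finset (Fin n)) ⊆ univ := subset_univ _
        have hpair : ∑ c'' ∈ ({c, c'} : Finset (Fin n)),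
            (if σ c'' (Sum.inl r) = i then 1 else 0) = 2 := by
          rw [Finset.sum_pair hne]
          simp [← hi, ← hcc]
        calc (2 : ℕ) = ∑ c'' ∈ ({c, c'} : Finset (Fin n)),
              (if σ c'' (Sum.inl r) = i then 1 else 0) := hpair.symm
          _ ≤ ∑ c'', if σ c'' (Sum.inl r) = i then 1 else 0 :=
              Finset.sum_le_sum_of_subset hsub
      rw [← hσcount] at h2le
      omega
    · -- column injectivity
      intro c r r' h
      exact Sum.inl_injective (hσinj c h)
    · -- coverage
      intro i r
      have hiff : (∃ c, σ c (Sum.inl r) = i) ↔ 0 < N (Sum.inl r) i := by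
        rw [hσcount (Sum.inl r) i]
        constructor
        · rintro ⟨c, hc⟩
          have : (1 : ℕ) ≤ ∑ c', if σ c' (Sum.inl r) = i then 1 else 0 := by
            calc (1:ℕ) = (if σ c (Sum.inl r) = i then 1 else 0) := by simp [hc]
              _ ≤ ∑ c', (if σ c' (Sum.inl r) = i then 1 else 0) :=
                Finset.single_le_sum
                  (f := fun c' => if σ c' (Sum.inl r) = i then 1 else 0)
                  (fun c' _ => Nat.zero_le _) (mem_univ c)
          omega
        · intro hpos
          by_contra hno
          push_neg at hno
          have : ∑ c', (if σ c' (Sum.inl r) = i then 1 else 0) = 0 :=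
            Finset.sum_eq_zero fun c' _ => by simp [hno c']
          omega
      rw [hiff]
      simp only [hN, Sum.elim_inl]
      split <;> simp_all
end

section
/- If Γ is an r-regular finite simple graph with r ≥ 2, then pmd(Γ) ≥ r + 1. -/
open SimpleGraph

variable {V : Type*}

/-- Every finite graph has a PMD: put each edge in its own part. -/
lemma exists_pmd [Fintype V] (G : SimpleGraph V) [DecidableRel G.Adj] :
    ∃ p : ℕ, ∃ E : Fin p → Set (Sym2 V), IsPMD G E := by
  classical
  set q := G.edgeFinset.equivFin.symm with hq
  refine ⟨G.edgeFinset.card, fun i => {(q i : Sym2 V)}, ?_, ?_, ?_⟩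
  · intro i j hij
    rw [Set.disjoint_singleton]
    intro h
    exact hij (q.injective (Subtype.val_injective h))
  · ext e
    simp only [Set.mem_iUnion, Set.mem_singleton_iff]
    constructor
    · rintro ⟨i, rfl⟩
      exact mem_edgeFinset.mp (q i).2
    · intro he
      exact ⟨q.symm ⟨e, mem_edgeFinset.mpr he⟩, by simp⟩
  · intro i
    have heE : (q i : Sym2 V) ∈ G.edgeSet := mem_edgeFinset.mp (q i).2
    obtain ⟨a, b, hab⟩ : ∃ a b, (q i : Sym2 V) = s(a, b) := Sym2.exists.mp ⟨_, rfl⟩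
    have hadj : G.Adj a b := by rw [← mem_edgeSet, ← hab]; exact heE
    refine ⟨?_, ?_, ?_⟩
    · intro f hf
      rw [Set.mem_singleton_iff] at hf
      subst hf
      rw [edgeSet_deleteEdges]
      refine ⟨heE, ?_⟩
      intro hmem
      simp only [Set.mem_iUnion, Set.mem_singleton_iff] at hmem
      obtain ⟨j, hji, hj⟩ := hmem
      exact absurd (q.injective (Subtype.val_injective hj.symm)) (ne_of_lt hji)
    · intro e he f hf hne
      rw [Set.mem_singleton_iff] at he hf
      exact absurd (he.trans hf.symm) hne
    · refine ⟨fun x => if x = a ∨ x = b then (1 : ℝ) else -3, ?_⟩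
      intro u v huv
      have hune : u ≠ v := huv.ne
      constructor
      · intro hpos
        by_cases hu : u = a ∨ u = b <;> by_cases hv : v = a ∨ v = b
        · rcases hu with rfl | rfl <;> rcases hv with rfl | rfl
          · exact absurd rfl hune
          · rw [Set.mem_singleton_iff, hab]
          · rw [Set.mem_singleton_iff, hab]; exact Sym2.eq_swap
          · exact absurd rfl hune
        all_goals simp only [hu, hv, if_true, if_false] at hpos; norm_num at hpos
      · intro hM
        rw [Set.mem_singleton_iff, hab] at hM
        rcases Sym2.eq_iff.mp hM with ⟨rfl, rfl⟩ | ⟨rfl, rfl⟩ <;>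
          simp only [true_or, or_true, if_true] <;> norm_num

/-- Any PMD of an `r`-regular graph (`r ≥ 2`) on a nonempty vertex set has at least
`r + 1` parts. -/
lemma pmd_aux [Fintype V] [Nonempty V] (G : SimpleGraph V) [DecidableRel G.Adj]
    (r : ℕ) (hr : 2 ≤ r) (hreg : G.IsRegularOfDegree r)
    {p : ℕ} (E : Fin p → Set (Sym2 V)) (hE : IsPMD G E) : r + 1 ≤ p := by
  classical
  obtain ⟨hdisj, hcover, hpos⟩ := hE
  by_contra hlt
  push_neg at hlt
  have hpr : p ≤ r := Nat.lt_succ_iff.mp hlt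
  have hvd : ∀ v : V, (G.neighborFinset v).card = r := fun v =>
    (G.card_neighborFinset_eq_degree v).trans (hreg v)
  have hmem : ∀ u v : V, G.Adj u v → ∃ i, s(u, v) ∈ E i := by
    intro u v h
    have h' : s(u, v) ∈ G.edgeSet := h
    rw [← hcover] at h'
    exact Set.mem_iUnion.mp h'
  -- edges in the same part sharing a vertex are equal
  have hshare : ∀ i : Fin p, ∀ e ∈ E i, ∀ f ∈ E i, ∀ v : V, v ∈ e → v ∈ f → e = f := by
    intro i e he f hf v hve hvf
    by_contra hne
    exact (hpos i).2.1 e he f hf hne v hve hvf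
  -- the index map at each vertex and its injectivity
  have key : ∀ v : V, ∃ g : {u // u ∈ G.neighborFinset v} → Fin p,
      (∀ u, s(v, (u : V)) ∈ E (g u)) ∧ Function.Injective g := by
    intro v
    refine ⟨fun u => (hmem v u ((G.mem_neighborFinset v u).mp u.2)).choose,
      fun u => (hmem v u ((G.mem_neighborFinset v u).mp u.2)).choose_spec, ?_⟩
    intro u₁ u₂ h
    have h₁ := (hmem v u₁ ((G.mem_neighborFinset v u₁).mp u₁.2)).choose_spec
    have h₂ := (hmem v u₂ ((G.mem_neighborFinset v u₂).mp u₂.2)).choose_spec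
    have h' : (hmem v u₁ ((G.mem_neighborFinset v u₁).mp u₁.2)).choose =
        (hmem v u₂ ((G.mem_neighborFinset v u₂).mp u₂.2)).choose := h
    rw [h'] at h₁
    have heq := hshare _ _ h₁ _ h₂ v (Sym2.mem_mk_left v u₁) (Sym2.mem_mk_left v u₂)
    rcases Sym2.eq_iff.mp heq with ⟨_, h'⟩ | ⟨h', _⟩
    · exact Subtype.ext h'
    · exact absurd h'.symm ((G.mem_neighborFinset v u₂).mp u₂.2).ne'
  have hcardsub : ∀ v : V, Fintype.card {u // u ∈ G.neighborFinset v} = r := by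
    intro v; rw [Fintype.card_coe]; exact hvd v
  -- r ≤ p
  have hrp : r ≤ p := by
    obtain ⟨v⟩ := ‹Nonempty V›
    obtain ⟨g, _, hginj⟩ := key v
    have := Fintype.card_le_of_injective g hginj
    rwa [hcardsub v, Fintype.card_fin] at this
  have hpe : p = r := le_antisymm hpr hrp
  have hp0 : 0 < p := lt_of_lt_of_le (by omega) hrp
  -- every vertex is covered by the first part
  have hE0 : ∀ v : V, ∃ u : V, G.Adj v u ∧ s(v, u) ∈ E ⟨0, hp0⟩ := by
    intro v
    obtain ⟨g, hg, hginj⟩ := key v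
    have hbij : Function.Bijective g :=
      (Fintype.bijective_iff_injective_and_card g).mpr
        ⟨hginj, by rw [hcardsub v, Fintype.card_fin, hpe]⟩
    obtain ⟨u, hu⟩ := hbij.2 ⟨0, hp0⟩
    refine ⟨u, (G.mem_neighborFinset v u).mp u.2, ?_⟩
    have := hg u
    rwa [hu] at this
  -- the first part is a positive matching of G itself
  have hDempty : (⋃ j : Fin p, ⋃ (_ : j < (⟨0, hp0⟩ : Fin p)), E j) = ∅ := by
    have : ∀ j : Fin p, ¬ j < (⟨0, hp0⟩ : Fin p) := fun j h => Nat.not_lt_zero j.1 h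
    simp [this]
  have hpos0 := hpos ⟨0, hp0⟩
  rw [hDempty, deleteEdges_empty] at hpos0
  obtain ⟨hsub, hmatch, w, hw⟩ := hpos0
  obtain ⟨v, hv⟩ := Finite.exists_max w
  obtain ⟨u, hvu, hvuE⟩ := hE0 v
  -- pick a neighbor x ≠ u of v
  have hcard1 : 1 < (G.neighborFinset v).card := by rw [hvd v]; omega
  obtain ⟨x, hx, hxu⟩ := Finset.exists_mem_ne hcard1 u
  have hvx : G.Adj v x := (G.mem_neighborFinset v x).mp hx
  have h2 : ¬ 0 < w v + w x := by
    intro h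
    have hxE : s(v, x) ∈ E ⟨0, hp0⟩ := (hw v x hvx).mp h
    have hne : s(v, x) ≠ s(v, u) := by
      intro h'
      rcases Sym2.eq_iff.mp h' with ⟨_, h''⟩ | ⟨h'', _⟩
      · exact hxu h''
      · exact hvu.ne h''
    exact hmatch _ hxE _ hvuE hne v (Sym2.mem_mk_left v x) (Sym2.mem_mk_left v u)
  push_neg at h2
  obtain ⟨y, hxy, hxyE⟩ := hE0 x
  have h3 : 0 < w x + w y := (hw x y hxy).mpr hxyE
  have hy := hv y
  linarith

/-- If `Γ` is an `r`-regular graph with `r ≥ 2`, then `pmd(Γ) ≥ r + 1`. -/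
theorem pmd_regular [Fintype V] [Nonempty V] (G : SimpleGraph V) [DecidableRel G.Adj]
    (r : ℕ) (hr : 2 ≤ r) (hreg : G.IsRegularOfDegree r) : r + 1 ≤ pmd G := by
  obtain ⟨p₀, E₀, hE₀⟩ := exists_pmd G
  exact le_csInf ⟨p₀, E₀, hE₀⟩ fun p hp => by
    obtain ⟨E, hE⟩ := hp
    exact pmd_aux G r hr hreg E hE
end

section
/- Every cycle graph C_n with n ≥ 3 satisfies pmd(C_n) = 3. -/
open SimpleGraph

variable {V : Type*}

/-!
A positive matching `M` of `Cₙ` whose complement is also a matching alternates around the cycle.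
Then summing `w u + w v` over the edges of `M`, and over the edges outside `M`, both give the
total weight `∑ w`, which would have to be positive and non-positive at once. Since with at most
two parts the first part is such a matching, a decomposition needs three parts. Three suffice:
the closing edge `s(n-1, 0)` alone (weight `1` on its ends and `-1` elsewhere), then the even
edges of the remaining path `0 - 1 - ⋯ - (n-1)` (weight `w v = -(-1)ᵛ v`, whose sum over the edge
`s(i, i+1)` is `(-1)ⁱ`), and finally the odd edges of that path.
-/

def PairwiseVertexDisjoint (M : Set (Sym2 V)) : Prop :=
  ∀ e ∈ M, ∀ f ∈ M, e ≠ f → ∀ v : V, v ∈ e → v ∉ f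

theorem PairwiseVertexDisjoint.mono {M N : Set (Sym2 V)} (hN : PairwiseVertexDisjoint N)
    (hMN : M ⊆ N) : PairwiseVertexDisjoint M :=
  fun e he f hf => hN e (hMN he) f (hMN hf)

namespace IsPositiveMatching

variable {G : SimpleGraph V}

theorem pairwiseVertexDisjoint {M : Set (Sym2 V)} (hM : IsPositiveMatching G M) :
    PairwiseVertexDisjoint M :=
  hM.2.1

theorem empty : IsPositiveMatching G ∅ :=
  ⟨Set.empty_subset _, by simp, 0, fun u v _ => by simp⟩

theorem singleton {u v : V} (h : G.Adj u v) : IsPositiveMatching G {s(u, v)} := by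
  classical
  refine ⟨by simpa using h, by simp_all, fun x => if x ∈ s(u, v) then 1 else -1, ?_⟩
  intro a b hab
  rw [Set.mem_singleton_iff, eq_comm, ← Sym2.mem_and_mem_iff hab.ne]
  dsimp only
  split_ifs <;> simp_all

theorem edgeSet (h : PairwiseVertexDisjoint G.edgeSet) : IsPositiveMatching G G.edgeSet :=
  ⟨subset_rfl, h, fun _ => 1, fun u v huv => by simpa using huv⟩

end IsPositiveMatching

namespace IsPMD

variable {G : SimpleGraph V}

theorem isPositiveMatching_zero {p : ℕ} {E : Fin (p + 1) → Set (Sym2 V)} (hE : IsPMD G E) :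
    IsPositiveMatching G (E 0) := by
  simpa using hE.2.2 0

theorem exists_isPositiveMatching_of_le_two {p : ℕ} {E : Fin p → Set (Sym2 V)} (hE : IsPMD G E) (hp : p ≤ 2) :
    ∃ M, IsPositiveMatching G M ∧ PairwiseVertexDisjoint (G.edgeSet \ M) := by
  have hunion := hE.2.1
  interval_cases p
  · refine ⟨∅, .empty, ?_⟩
    simp [← hunion, PairwiseVertexDisjoint]
  · refine ⟨E 0, hE.isPositiveMatching_zero, ?_⟩
    simp [← hunion, PairwiseVertexDisjoint]
  · refine ⟨E 0, hE.isPositiveMatching_zero, (hE.2.2 1).pairwiseVertexDisjoint.mono ?_⟩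
    simp [← hunion]

end IsPMD

theorem isPMD_three {G : SimpleGraph V} {A B : Set (Sym2 V)} (hA : IsPositiveMatching G A)
    (hB : IsPositiveMatching (G.deleteEdges A) B)
    (hC : PairwiseVertexDisjoint (G.edgeSet \ (A ∪ B))) :
    IsPMD G ![A, B, G.edgeSet \ (A ∪ B)] := by
  have hBA : B ⊆ G.edgeSet \ A := by simpa using hB.1
  have hAB : Disjoint A B := Set.disjoint_of_subset_right hBA Set.disjoint_sdiff_right
  refine ⟨?_, ?_, ?_⟩
  · intro i j hij
    fin_cases i <;> fin_cases j <;> simp at hij ⊢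
    all_goals rw [Set.disjoint_left] at hAB ⊢; grind
  · ext e
    have hAe : e ∈ A → e ∈ G.edgeSet := @hA.1 e
    have hBe : e ∈ B → e ∈ G.edgeSet := fun h => (hBA h).1
    simp [Fin.exists_fin_succ]
    tauto
  · intro i
    fin_cases i
    · simpa using hA
    · simpa using hB
    · have hbelow : (⋃ j : Fin 3, ⋃ (_ : j < 2), ![A, B, G.edgeSet \ (A ∪ B)] j) = A ∪ B := by
        ext e
        simp [Fin.exists_fin_succ]
      change IsPositiveMatching (G.deleteEdges (⋃ j : Fin 3, ⋃ (_ : j < 2), _)) (G.edgeSet \ (A ∪ B))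
      rw [hbelow, ← edgeSet_deleteEdges]
      exact .edgeSet (by rwa [edgeSet_deleteEdges])

section ShiftSums

variable {α : Type*} [AddGroup α] [Fintype α] [DecidableEq α]

theorem Finset.sum_add_shift_of_add_mem_iff_notMem {M : Type*} [AddCommMonoid M] {A : Finset α}
    {g : α} (hA : ∀ x, x + g ∈ A ↔ x ∉ A) (f : α → M) :
    ∑ x ∈ A, (f x + f (x + g)) = ∑ x, f x := by
  have hshift : ∑ x ∈ A, f (x + g) = ∑ x ∈ Aᶜ, f x :=
    Finset.sum_nbij' (· + g) (· - g) (by simp [hA])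
      (fun x hx => by simpa [Finset.mem_compl.1 hx] using hA (x - g)) (by simp) (by simp)
      (fun _ _ => rfl)
  rw [Finset.sum_add_distrib, hshift, Finset.sum_add_sum_compl]

theorem not_forall_pos_add_shift_iff_of_alternating {P : α → Prop} {g : α}
    (hP : ∀ x, P (x + g) ↔ ¬P x) (w : α → ℝ) : ¬∀ x, 0 < w x + w (x + g) ↔ P x := by
  classical
  intro hw
  set A := Finset.univ.filter P
  have hA : ∀ x, x + g ∈ A ↔ x ∉ A := by simpa [A] using hP
  have hAc : ∀ x, x + g ∈ Aᶜ ↔ x ∉ Aᶜ := by simpa [A] using fun x => (hP x).not.trans not_not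
  have hA_nonempty : A.Nonempty := by
    by_cases h0 : P 0
    · exact ⟨0, by simpa [A]⟩
    · exact ⟨0 + g, by simpa [A] using (hP 0).2 h0⟩
  have hpos : 0 < ∑ x ∈ A, (w x + w (x + g)) :=
    Finset.sum_pos (fun x hx => (hw x).2 (by simpa [A] using hx)) hA_nonempty
  have hnonpos : ∑ x ∈ Aᶜ, (w x + w (x + g)) ≤ 0 :=
    Finset.sum_nonpos fun x hx => not_lt.1 fun h => by simp_all [A]
  rw [Finset.sum_add_shift_of_add_mem_iff_notMem hA] at hpos
  rw [Finset.sum_add_shift_of_add_mem_iff_notMem hAc] at hnonpos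
  linarith

end ShiftSums

namespace SimpleGraph

variable {n : ℕ}

theorem cycleGraph_adj_iff_eq_add_one {u v : Fin (n + 3)} :
    (cycleGraph (n + 3)).Adj u v ↔ v = u + 1 ∨ u = v + 1 := by
  rw [cycleGraph_adj (n := n + 1), sub_eq_iff_eq_add, sub_eq_iff_eq_add, add_comm 1 u,
    add_comm 1 v, or_comm]

theorem cycleGraph_adj_add_one (i : Fin (n + 3)) : (cycleGraph (n + 3)).Adj i (i + 1) :=
  cycleGraph_adj_iff_eq_add_one.2 (Or.inl rfl)

theorem mem_edgeSet_cycleGraph {e : Sym2 (Fin (n + 3))} :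
    e ∈ (cycleGraph (n + 3)).edgeSet ↔ ∃ i, s(i, i + 1) = e := by
  induction e using Sym2.ind with
  | _ u v =>
    rw [mem_edgeSet, cycleGraph_adj_iff_eq_add_one]
    constructor
    · rintro (rfl | rfl)
      exacts [⟨u, rfl⟩, ⟨v, Sym2.eq_swap⟩]
    · rintro ⟨i, hi⟩
      rcases Sym2.eq_iff.1 hi with ⟨rfl, rfl⟩ | ⟨rfl, rfl⟩
      exacts [Or.inl rfl, Or.inr rfl]

theorem cycleGraph_edge_injective : Function.Injective fun i : Fin (n + 3) => s(i, i + 1) := by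
  intro i j h
  rcases Sym2.eq_iff.1 h with ⟨hij, -⟩ | ⟨rfl, hj⟩
  · exact hij
  · rw [add_assoc, add_eq_left, Fin.ext_iff] at hj
    simp [Fin.val_add, Nat.mod_eq_of_lt (show 2 < n + 3 by omega)] at hj

theorem _root_.PairwiseVertexDisjoint.add_one_edge_notMem {M : Set (Sym2 (Fin (n + 3)))}
    (hM : PairwiseVertexDisjoint M) {i : Fin (n + 3)} (hi : s(i, i + 1) ∈ M) :
    s(i + 1, i + 1 + 1) ∉ M := by
  intro hi'
  have hne : s(i, i + 1) ≠ s(i + 1, i + 1 + 1) :=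
    cycleGraph_edge_injective.ne (by simp)
  exact hM _ hi _ hi' hne (i + 1) (Sym2.mem_mk_right _ _) (Sym2.mem_mk_left _ _)

theorem pairwiseVertexDisjoint_image_cycleGraph_edge {S : Set (Fin (n + 3))}
    (hS : ∀ i ∈ S, i + 1 ∉ S) : PairwiseVertexDisjoint ((fun i => s(i, i + 1)) '' S) := by
  rintro _ ⟨i, hi, rfl⟩ _ ⟨j, hj, rfl⟩ hne v hvi hvj
  have hij : i ≠ j := fun h => hne (h ▸ rfl)
  simp only [Sym2.mem_iff] at hvi hvj
  rcases hvi with rfl | rfl <;> rcases hvj with h | h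
  · exact hij h
  · exact hS j hj (h ▸ hi)
  · exact hS i hi (h ▸ hj)
  · exact hij (add_right_cancel h)

theorem isPositiveMatching_cycleGraph_deleteEdges {D M : Set (Sym2 (Fin (n + 3)))}
    (hMD : M ⊆ (cycleGraph (n + 3)).edgeSet \ D) (hM : PairwiseVertexDisjoint M)
    (w : Fin (n + 3) → ℝ) (hw : ∀ i, s(i, i + 1) ∉ D → (0 < w i + w (i + 1) ↔ s(i, i + 1) ∈ M)) :
    IsPositiveMatching ((cycleGraph (n + 3)).deleteEdges D) M := by
  refine ⟨by rwa [edgeSet_deleteEdges], hM, w, fun u v huv => ?_⟩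
  rw [deleteEdges_adj, cycleGraph_adj_iff_eq_add_one] at huv
  obtain ⟨rfl | rfl, hD⟩ := huv
  · exact hw u hD
  · rw [Sym2.eq_swap] at hD ⊢
    rw [add_comm]
    exact hw v hD

theorem cycleGraph_not_pairwiseVertexDisjoint_edgeSet_diff {M : Set (Sym2 (Fin (n + 3)))}
    (hM : IsPositiveMatching (cycleGraph (n + 3)) M) :
    ¬PairwiseVertexDisjoint ((cycleGraph (n + 3)).edgeSet \ M) := by
  intro hC
  obtain ⟨w, hw⟩ := hM.2.2
  have hedge (i : Fin (n + 3)) : s(i, i + 1) ∈ (cycleGraph (n + 3)).edgeSet :=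
    cycleGraph_adj_add_one i
  refine not_forall_pos_add_shift_iff_of_alternating (P := fun i => s(i, i + 1) ∈ M) (fun i => ?_)
    w fun i => hw i (i + 1) (cycleGraph_adj_add_one i)
  refine ⟨fun hi' hi => hM.pairwiseVertexDisjoint.add_one_edge_notMem hi hi', fun hi => ?_⟩
  by_contra hi'
  exact hC.add_one_edge_notMem ⟨hedge i, hi⟩ ⟨hedge (i + 1), hi'⟩

theorem isPositiveMatching_even_edges_cycleGraph_deleteEdges_last :
    IsPositiveMatching ((cycleGraph (n + 3)).deleteEdges {s(Fin.last _, Fin.last _ + 1)})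
      ((fun i => s(i, i + 1)) '' {i | i ≠ Fin.last _ ∧ Even i.val}) := by
  have val_add_one {i : Fin (n + 3)} (hi : i ≠ Fin.last _) : (i + 1).val = i.val + 1 :=
    Fin.val_add_one_of_lt (Fin.lt_last_iff_ne_last.2 hi)
  refine isPositiveMatching_cycleGraph_deleteEdges ?_ ?_ (fun v => -((-1) ^ v.val * v.val)) ?_
  · rintro _ ⟨i, ⟨hi, -⟩, rfl⟩
    exact ⟨cycleGraph_adj_add_one i, fun h => hi (cycleGraph_edge_injective h)⟩
  · refine pairwiseVertexDisjoint_image_cycleGraph_edge fun i ⟨hi, heven⟩ ⟨_, heven'⟩ => ?_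
    rw [val_add_one hi, Nat.even_add_one] at heven'
    exact heven' heven
  · intro i hi
    have hi : i ≠ Fin.last _ := fun h => hi (h ▸ rfl)
    have hsum : -((-1) ^ i.val * (i.val : ℝ)) + -((-1) ^ (i.val + 1) * ((i.val + 1 : ℕ) : ℝ))
        = (-1) ^ i.val := by push_cast; ring
    rw [val_add_one hi, hsum, cycleGraph_edge_injective.mem_set_image]
    rcases Nat.even_or_odd i.val with h | h
    · simp [hi, h, h.neg_one_pow]
    · simp [h.neg_one_pow, Nat.not_even_iff_odd.2 h]

theorem cycleGraph_exists_isPMD_three :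
    ∃ E : Fin 3 → Set (Sym2 (Fin (n + 3))), IsPMD (cycleGraph (n + 3)) E := by
  set A : Set (Sym2 (Fin (n + 3))) := {s(Fin.last _, Fin.last _ + 1)}
  set B := (fun i => s(i, i + 1)) '' {i : Fin (n + 3) | i ≠ Fin.last _ ∧ Even i.val}
  have hC : PairwiseVertexDisjoint ((cycleGraph (n + 3)).edgeSet \ (A ∪ B)) := by
    refine (pairwiseVertexDisjoint_image_cycleGraph_edge (S := {i | i ≠ Fin.last _ ∧ ¬Even i.val})
      fun i ⟨hi, hodd⟩ ⟨_, hodd'⟩ => ?_).mono ?_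
    · rintro e ⟨he, heAB⟩
      obtain ⟨i, rfl⟩ := mem_edgeSet_cycleGraph.1 he
      have hi : i ≠ Fin.last _ := fun h => heAB (Or.inl (h ▸ rfl))
      exact ⟨i, ⟨hi, fun heven => heAB (Or.inr ⟨i, ⟨hi, heven⟩, rfl⟩)⟩, rfl⟩
    · rw [Fin.val_add_one_of_lt (Fin.lt_last_iff_ne_last.2 hi), Nat.even_add_one] at hodd'
      exact hodd' hodd
  exact ⟨_, isPMD_three (.singleton (cycleGraph_adj_add_one _))
    isPositiveMatching_even_edges_cycleGraph_deleteEdges_last hC⟩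

end SimpleGraph

/-- Every cycle graph `Cₙ` with `n ≥ 3` satisfies `pmd(Cₙ) = 3`. -/
theorem pmd_cycleGraph (n : ℕ) (hn : 3 ≤ n) : pmd (cycleGraph n) = 3 := by
  obtain ⟨m, rfl⟩ : ∃ m, n = m + 3 := ⟨n - 3, by omega⟩
  obtain ⟨E, hE⟩ := cycleGraph_exists_isPMD_three (n := m)
  refine le_antisymm (Nat.sInf_le ⟨E, hE⟩) (le_csInf ⟨3, E, hE⟩ ?_)
  rintro p ⟨E', hE'⟩
  by_contra! hp
  obtain ⟨M, hM, hC⟩ := hE'.exists_isPositiveMatching_of_le_two (by omega)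
  exact cycleGraph_not_pairwiseVertexDisjoint_edgeSet_diff hM hC
end

section
/- For a connected finite simple graph Γ, the following are equivalent: (1) every pair of disjoint edges of Γ lies on a common 4-cycle; (2) every vertex v and every edge e not containing v satisfy that v is adjacent to at least one endpoint of e; (3) Γ is a complete multipartite graph. -/
open SimpleGraph

variable {V : Type*}

/-- `G` is a complete multipartite graph: there is an equivalence relation (whose classes are the
parts, which are independent sets) such that two vertices are adjacent iff they are
inequivalent. -/
def IsCompleteMultipartite' (G : SimpleGraph V) : Prop :=
  ∃ r : Setoid V, ∀ u v : V, G.Adj u v ↔ ¬ r.r u v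

lemma two_to_cmp (G : SimpleGraph V)
    (h : ∀ z x y : V, G.Adj x y → z ≠ x → z ≠ y → (G.Adj z x ∨ G.Adj z y)) :
    IsCompleteMultipartite' G := by
  refine ⟨⟨fun u v => ¬ G.Adj u v, ?_, ?_, ?_⟩, fun u v => (not_not).symm⟩
  · exact fun v => G.irrefl
  · exact fun h' ha => h' ha.symm
  · intro u v w huv hvw huw
    rcases eq_or_ne v u with rfl | hvu
    · exact hvw huw
    rcases eq_or_ne v w with rfl | hvw'
    · exact huv huw
    rcases h v u w huw hvu hvw' with hx | hx
    · exact huv hx.symm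
    · exact hvw hx

lemma cmp_to_two (G : SimpleGraph V) (h : IsCompleteMultipartite' G) :
    ∀ z x y : V, G.Adj x y → z ≠ x → z ≠ y → (G.Adj z x ∨ G.Adj z y) := by
  obtain ⟨r, hr⟩ := h
  intro z x y hxy _ _
  by_contra hc
  push_neg at hc
  obtain ⟨h1, h2⟩ := hc
  rw [hr] at h1 h2
  push_neg at h1 h2
  exact (hr x y).mp hxy (r.trans (r.symm h1) h2)

lemma cmp_to_one (G : SimpleGraph V) (h : IsCompleteMultipartite' G) :
    ∀ u v x y : V, G.Adj u v → G.Adj x y → u ≠ x → u ≠ y → v ≠ x → v ≠ y →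
      ((G.Adj v x ∧ G.Adj y u) ∨ (G.Adj v y ∧ G.Adj x u)) := by
  obtain ⟨r, hr⟩ := h
  intro u v x y huv hxy _ _ _ _
  have huv' := (hr u v).mp huv
  have hxy' := (hr x y).mp hxy
  by_cases hvx : r.r v x
  · refine Or.inr ⟨(hr v y).mpr ?_, (hr x u).mpr ?_⟩
    · exact fun hvy => hxy' (r.trans (r.symm hvx) hvy)
    · exact fun hxu => huv' (r.trans (r.symm hxu) (r.symm hvx))
  · by_cases hyu : r.r y u
    · refine Or.inr ⟨(hr v y).mpr ?_, (hr x u).mpr ?_⟩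
      · exact fun hvy => huv' (r.symm (r.trans hvy hyu))
      · exact fun hxu => hxy' (r.trans hxu (r.symm hyu))
    · exact Or.inl ⟨(hr v x).mpr hvx, (hr y u).mpr hyu⟩

/-- For a connected finite simple graph `G`, the following are equivalent:
(1) every pair of disjoint edges lies on a common 4-cycle;
(2) every vertex is adjacent to an endpoint of every edge not containing it;
(3) `G` is complete multipartite. -/
theorem completeMultipartite_tfae [Fintype V] (G : SimpleGraph V) (hconn : G.Connected) :
    ((∀ u v x y : V, G.Adj u v → G.Adj x y → u ≠ x → u ≠ y → v ≠ x → v ≠ y →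
        ((G.Adj v x ∧ G.Adj y u) ∨ (G.Adj v y ∧ G.Adj x u))) ↔
      IsCompleteMultipartite' G) ∧
    ((∀ z x y : V, G.Adj x y → z ≠ x → z ≠ y → (G.Adj z x ∨ G.Adj z y)) ↔
      IsCompleteMultipartite' G) := by
  have one_to_two : (∀ u v x y : V, G.Adj u v → G.Adj x y → u ≠ x → u ≠ y → v ≠ x → v ≠ y →
        ((G.Adj v x ∧ G.Adj y u) ∨ (G.Adj v y ∧ G.Adj x u))) →
      ∀ z x y : V, G.Adj x y → z ≠ x → z ≠ y → (G.Adj z x ∨ G.Adj z y) := by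
    intro h1 z x y hxy hzx hzy
    -- z has a neighbor since G is connected and z ≠ x
    obtain ⟨p⟩ := hconn z x
    cases p with
    | nil => exact absurd rfl hzx
    | @cons _ w _ hzw q =>
      rcases eq_or_ne w x with rfl | hwx
      · exact Or.inl hzw
      rcases eq_or_ne w y with rfl | hwy
      · exact Or.inr hzw
      rcases h1 z w x y hzw hxy hzx hzy hwx hwy with ⟨_, hyz⟩ | ⟨_, hxz⟩
      · exact Or.inr hyz.symm
      · exact Or.inl hxz.symm
  exact ⟨⟨fun h1 => two_to_cmp G (one_to_two h1), fun hm u v x y a b c d e f =>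
      cmp_to_one G hm u v x y a b c d e f⟩,
    ⟨two_to_cmp G, cmp_to_two G⟩⟩
end

section
/- Let Γ be a connected graph such that every proper subset X of V(Γ) is a (1/2)-set, meaning there exists u ∈ V(Γ)\X with |N_Γ(u) ∩ X| ≥ |X|/2. Then the minimum number of forests needed to cover all edges of Γ equals ⌈|E(Γ)|/(|V(Γ)|−1)⌉. -/
open SimpleGraph

variable {V : Type*}

/-- The minimum number of forests needed to cover all edges of `G`. -/
noncomputable def forestCoverNumber [Fintype V] (G : SimpleGraph V) : ℕ :=
  sInf {t : ℕ | ∃ F : Fin t → Set (Sym2 V),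
    (∀ i, F i ⊆ G.edgeSet ∧ (SimpleGraph.fromEdgeSet (F i)).IsAcyclic) ∧
    (⋃ i, F i) = G.edgeSet}

/-!
A forest on `n` vertices has at most `n - 1` edges, so `⌈|E| / (|V| - 1)⌉` forests are needed.
For the converse put `K = ⌈|E| / (|V| - 1)⌉`. The bound `|E(X)| ≤ K (|X| - 1)` holds for
`X = V`, and it descends from `X ∪ {u}` to `X` when `u ∉ X` has `d ≥ |X| / 2` neighbours in `X`:
were it false for `X`, then `d < K`, so `|X| ≤ 2K - 2` and `|E(X)| ≤ |X| (|X| - 1) / 2` would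
already be at most `(K - 1)(|X| - 1)`. By the (1/2)-set hypothesis every `X` is reached this way.

It remains to prove the relevant half of Nash-Williams' theorem: if `|E(X)| ≤ K (|X| - 1)` for
all `X`, then `K` forests cover `E`. Add the edges one at a time to a family of `K` edge-disjoint
forests. For a new edge `e₀`, look for a chain `e₀, e₁, …, eₙ` in which each `eⱼ₊₁` lies in a
forest on the path that joins the ends of `eⱼ`, and `eₙ` can be added to some forest. On a
shortest such chain the swaps can be made one at a time from the end. If there is no such chain,
every forest connects the set `X` of ends of the reachable edges `A` inside `A`. Since the
forests are disjoint and miss `e₀`, `|A| > K (|X| - 1)`, which the density bound rules out.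
-/

namespace Nat

lemma ceil_div_sub_one_le_iff {m n t : ℕ} (h : n ≤ 1 → m = 0) :
    ⌈(m : ℚ) / ((n : ℚ) - 1)⌉₊ ≤ t ↔ m ≤ t * (n - 1) := by
  rcases le_or_gt n 1 with hn | hn
  · simp [h hn]
  have hpos : (0 : ℚ) < n - 1 := by
    have : (1 : ℚ) < n := by exact_mod_cast hn
    linarith
  rw [Nat.ceil_le, div_le_iff₀ hpos, ← Nat.cast_pred (by omega)]
  exact_mod_cast Iff.rfl

lemma le_mul_sub_one_of_add_le {e d x K : ℕ} (h : e + d ≤ K * x) (hd : x ≤ 2 * d)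
    (he : 2 * e ≤ x * (x - 1)) : e ≤ K * (x - 1) := by
  rcases Nat.eq_zero_or_pos x with rfl | hx
  · simp_all
  by_contra! hlt
  have hx1 : (1 : ℤ) ≤ x := by exact_mod_cast hx
  zify [hx] at *
  have hdK : (d : ℤ) ≤ K - 1 := by nlinarith
  nlinarith [mul_nonneg (sub_nonneg.mpr hx1) (show (0 : ℤ) ≤ 2 * K - 2 - x by linarith)]

end Nat

lemma Set.sum_ncard_fiber_inter_add_one_le {α ι : Type*} [Finite α] [Fintype ι]
    (c : α → Option ι) {A : Set α} {a : α} (ha : a ∈ A) (hca : c a = none) :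
    ∑ i, ({x | c x = some i} ∩ A).ncard + 1 ≤ A.ncard := by
  rw [← finsum_eq_sum_of_fintype, ← Set.ncard_iUnion_of_finite (fun _ => Set.toFinite _)
    fun i j hij => Set.disjoint_left.mpr fun x hi hj =>
      hij (Option.some_injective _ (hi.1.symm.trans hj.1)),
    ← Set.ncard_sdiff_singleton_add_one ha]
  refine Nat.add_le_add_right (Set.ncard_le_ncard ?_) 1
  simp only [Set.iUnion_subset_iff]
  rintro i x ⟨hx, hxA⟩
  exact ⟨hxA, fun h => by simp_all⟩

namespace Relation

inductive ReachesIn {α : Type*} (r : α → α → Prop) (a : α) : ℕ → α → Prop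
  | refl : ReachesIn r a 0 a
  | tail {n : ℕ} {b c : α} : ReachesIn r a n b → r b c → ReachesIn r a (n + 1) c

end Relation

namespace SimpleGraph

variable {G H K : SimpleGraph V}

lemma IsAcyclic.edges_subset_edges_of_isPath (hG : G.IsAcyclic) {u v : V} {p : G.Walk u v}
    (hp : p.IsPath) (q : G.Walk u v) : p.edges ⊆ q.edges := by
  classical
  have : p = q.bypass :=
    congrArg Subtype.val ((hG.subsingleton_path u v).elim ⟨p, hp⟩ ⟨_, q.bypass_isPath⟩)
  exact this ▸ q.edges_bypass_subset_edges

lemma IsAcyclic.not_reachable_deleteEdges_of_mem_edges (hG : G.IsAcyclic) {u v : V}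
    {p : G.Walk u v} (hp : p.IsPath) {f : Sym2 V} (hf : f ∈ p.edges) :
    ¬ (G.deleteEdges {f}).Reachable u v := by
  rintro ⟨q⟩
  have := hG.edges_subset_edges_of_isPath hp (q.mapLe (G.deleteEdges_le _)) hf
  rw [Walk.edges_mapLe_eq_edges] at this
  simpa using q.edges_subset_edgeSet this

lemma IsAcyclic.ncard_edgeSet_add_one_le [Finite V] [Nonempty V] (hG : G.IsAcyclic) :
    G.edgeSet.ncard + 1 ≤ Nat.card V := by
  classical
  have := Fintype.ofFinite V
  obtain ⟨T, hGT, -, hT⟩ := connected_top.exists_isTree_le_of_le_of_isAcyclic le_top hG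
  calc G.edgeSet.ncard + 1 ≤ T.edgeSet.ncard + 1 :=
        Nat.add_le_add_right (Set.ncard_le_ncard (edgeSet_mono hGT)) 1
    _ = Nat.card V := by
      rw [Nat.card_eq_fintype_card, ← hT.card_edgeFinset, ← Set.ncard_coe_finset,
        coe_edgeFinset]

lemma ncard_le_ncard_edgeSet_add_one [Finite V] {X : Set V} {a : V}
    (hX : ∀ v ∈ X, G.Reachable a v) : X.ncard ≤ G.edgeSet.ncard + 1 := by
  set C := G.connectedComponentMk a
  calc X.ncard ≤ C.supp.ncard :=
        Set.ncard_le_ncard fun v hv => ConnectedComponent.eq.mpr (hX v hv).symm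
    _ = Nat.card C.supp := (Nat.card_coe_set_eq _).symm
    _ ≤ Nat.card C.toSimpleGraph.edgeSet + 1 :=
        C.connected_toSimpleGraph.card_vert_le_card_edgeSet_add_one
    _ ≤ Nat.card G.edgeSet + 1 := by
      gcongr
      exact Nat.card_le_card_of_injective _ (Embedding.induce _).mapEdgeSet.injective
    _ = G.edgeSet.ncard + 1 := by rw [Nat.card_coe_set_eq]

lemma Reachable.of_forall_adj {x y : V} (hGH : ∀ u v, G.Adj u v → H.Reachable u v)
    (h : G.Reachable x y) : H.Reachable x y := by
  rw [reachable_iff_reflTransGen] at h ⊢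
  exact Relation.reflTransGen_closed
    (fun u v huv => (reachable_iff_reflTransGen u v).mp (hGH u v huv)) _ _ h

lemma Reachable.of_sup_edge {a b x y : V} (h : (H ⊔ edge a b).Reachable x y) :
    H.Reachable x y ∨ H.Reachable x a ∨ H.Reachable x b := by
  rw [reachable_iff_reflTransGen] at h
  induction h with
  | refl => exact .inl .rfl
  | tail _ hadj ih =>
    rw [sup_adj, edge_adj] at hadj
    rcases hadj with hadj | ⟨⟨rfl, rfl⟩ | ⟨rfl, rfl⟩, -⟩
    · exact ih.imp_left (·.trans hadj.reachable)
    · exact .inr (ih.elim .inl id)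
    · exact .inr (ih.elim .inr id)

lemma not_reachable_sup_edge {a b x y : V} (hHK : H ≤ K) (hxy : K.Reachable x y)
    (hab : ¬ K.Reachable a b) (h : ¬ H.Reachable x y) : ¬ (H ⊔ edge a b).Reachable x y := by
  intro h'
  have hK {u v : V} (huv : H.Reachable u v) : K.Reachable u v := huv.mono hHK
  rcases h'.of_sup_edge with h₁ | h₁ | h₁ <;> rcases h'.symm.of_sup_edge with h₂ | h₂ | h₂
  all_goals first
    | exact h h₁ | exact h h₂.symm | exact h (h₁.trans h₂.symm)
    | exact hab ((hK h₁).symm.trans (hxy.trans (hK h₂)))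
    | exact hab ((hK h₂).symm.trans (hxy.symm.trans (hK h₁)))

lemma reachable_fromEdgeSet_of_mem {S : Set (Sym2 V)} {u v : V} (h : s(u, v) ∈ S) :
    (fromEdgeSet S).Reachable u v := by
  obtain rfl | huv := eq_or_ne u v
  · rfl
  · exact Adj.reachable ((fromEdgeSet_adj S).mpr ⟨h, huv⟩)

lemma reachable_fromEdgeSet_of_forall_mem_edges {S : Set (Sym2 V)} {u v : V} (p : G.Walk u v)
    (hp : ∀ e ∈ p.edges, e ∈ S) : (fromEdgeSet S).Reachable u v :=
  (p.transfer _ fun e he => (edgeSet_fromEdgeSet S).symm ▸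
    ⟨hp e he, G.not_isDiag_of_mem_edgeSet (p.edges_subset_edgeSet he)⟩).reachable

def Spans (H : SimpleGraph V) : Sym2 V → Prop :=
  Sym2.lift ⟨H.Reachable, fun _ _ => propext reachable_comm⟩

lemma Spans.mono (hHK : H ≤ K) {e : Sym2 V} (h : H.Spans e) : K.Spans e := by
  induction e using Sym2.ind with
  | _ a b => exact Reachable.mono hHK h

lemma spans_of_mem_edgeSet {e : Sym2 V} (he : e ∈ H.edgeSet) : H.Spans e := by
  induction e using Sym2.ind with
  | _ a b => exact Adj.reachable he

open Function Relation

variable {ι : Type*}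

/-- Edge-disjoint subgraphs indexed by `ι` are encoded as a partial edge colouring:
`c e = none` means that `e` lies in none of them. -/
def colorClass (c : Sym2 V → Option ι) (i : ι) : SimpleGraph V :=
  fromEdgeSet {e | c e = some i}

def IsForestColoring (c : Sym2 V → Option ι) : Prop := ∀ i, (colorClass c i).IsAcyclic

/-- When the colour class of `f` is a forest, trading `f` for `e` in it leaves a forest. -/
def Exchange (c : Sym2 V → Option ι) (e f : Sym2 V) : Prop :=
  ∃ i, f ∈ (colorClass c i).edgeSet ∧ (colorClass c i).Spans e ∧
    ¬ ((colorClass c i).deleteEdges {f}).Spans e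

def exchangeClosure (c : Sym2 V → Option ι) (e₀ : Sym2 V) : Set (Sym2 V) :=
  {f | ∃ n, ReachesIn (Exchange c) e₀ n f}

variable {c : Sym2 V → Option ι} {e e₀ f g : Sym2 V} {i : ι}

lemma mem_edgeSet_colorClass : f ∈ (colorClass c i).edgeSet ↔ c f = some i ∧ ¬ f.IsDiag := by
  rw [colorClass, edgeSet_fromEdgeSet]
  rfl

lemma Exchange.ne_none (h : Exchange c g f) : c f ≠ none := by
  obtain ⟨i, hf, -⟩ := h
  simp [(mem_edgeSet_colorClass.mp hf).1]

lemma exchangeClosure_subset : exchangeClosure c e₀ ⊆ insert e₀ {f | c f ≠ none} := by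
  rintro f ⟨n, hn⟩
  cases hn with
  | refl => exact .inl rfl
  | tail _ hstep => exact .inr hstep.ne_none

section Recolor

variable [DecidableEq V]

lemma colorClass_update_self :
    colorClass (update c e (some i)) i = colorClass c i ⊔ fromEdgeSet {e} := by
  rw [colorClass, colorClass, ← fromEdgeSet_union]
  congr 1
  ext f
  by_cases hf : f = e <;> simp [hf, update_apply]

lemma colorClass_update_of_ne {j : ι} (hji : j ≠ i) :
    colorClass (update c e (some i)) j = (colorClass c j).deleteEdges {e} := by
  rw [colorClass, colorClass, deleteEdges_fromEdgeSet]
  congr 1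
  ext f
  by_cases hf : f = e <;> simp [hf, update_apply, hji.symm]

lemma setOf_update_ne_none :
    {f | update c e (some i) f ≠ none} = insert e {f | c f ≠ none} := by
  ext f
  by_cases hf : f = e <;> simp [hf, update_apply]

lemma IsForestColoring.update (hc : IsForestColoring c) (he : ¬ (colorClass c i).Spans e) :
    IsForestColoring (update c e (some i)) := by
  intro j
  obtain rfl | hji := eq_or_ne j i
  · rw [colorClass_update_self]
    induction e using Sym2.ind with
    | _ a b => exact (hc j).sup_edge_of_not_reachable he
  · rw [colorClass_update_of_ne hji]
    exact (hc j).anti (deleteEdges_le _)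

lemma Exchange.update (hgf : Exchange c g f) (hg : ∀ l, (colorClass c l).Spans g)
    (hge : ¬ Exchange c g e) (hfe : f ≠ e) (he : ¬ (colorClass c i).Spans e) :
    Exchange (update c e (some i)) g f := by
  obtain ⟨l, hf, hgl, hgf⟩ := hgf
  refine ⟨l, ?_⟩
  obtain rfl | hli := eq_or_ne l i
  · have hef : (fromEdgeSet {e}).deleteEdges {f} = fromEdgeSet {e} := by
      rw [deleteEdges_eq_self, Set.disjoint_singleton_right, edgeSet_fromEdgeSet]
      exact fun h => hfe h.1
    rw [colorClass_update_self, deleteEdges_sup, hef]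
    refine ⟨edgeSet_mono le_sup_left hf, hgl.mono le_sup_left, ?_⟩
    induction g using Sym2.ind with | _ x y =>
    induction e using Sym2.ind with | _ a b =>
    exact not_reachable_sup_edge (deleteEdges_le _) hgl he hgf
  · rw [colorClass_update_of_ne hli]
    refine ⟨by rw [edgeSet_deleteEdges]; exact ⟨hf, hfe⟩, ?_,
      fun h => hgf (h.mono (deleteEdges_mono (deleteEdges_le _)))⟩
    by_contra hne
    refine hge ⟨l, ?_, hgl, hne⟩
    by_contra hel
    rw [deleteEdges_eq_self.mpr (Set.disjoint_singleton_right.mpr hel)] at hne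
    exact hne hgl

lemma reachesIn_update {n : ℕ} (he : ¬ (colorClass c i).Spans e)
    (hmin : ∀ m ≤ n, ∀ g l, ReachesIn (Exchange c) e₀ m g → (colorClass c l).Spans g)
    {m : ℕ} (h : ReachesIn (Exchange c) e₀ m g) (hm : m ≤ n) :
    ReachesIn (Exchange (update c e (some i))) e₀ m g := by
  induction h with
  | refl => exact .refl
  | tail hch hstep ih =>
    refine (ih (by omega)).tail (hstep.update (fun l => hmin _ (by omega) _ l hch) ?_ ?_ he)
    · exact fun hge => he (hmin _ hm _ i (hch.tail hge))
    · rintro rfl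
      exact he (hmin _ hm _ i (hch.tail hstep))

lemma exists_reachesIn_update {n : ℕ} (h : ReachesIn (Exchange c) e₀ (n + 1) e)
    (he : ¬ (colorClass c i).Spans e)
    (hmin : ∀ m ≤ n, ∀ g l, ReachesIn (Exchange c) e₀ m g → (colorClass c l).Spans g) :
    ∃ g j, ReachesIn (Exchange (update c e (some i))) e₀ n g ∧
      ¬ (colorClass (update c e (some i)) j).Spans g := by
  obtain _ | ⟨hch, ⟨j, hej, -, hg⟩⟩ := h
  have hji : j ≠ i := by
    rintro rfl
    exact he (spans_of_mem_edgeSet hej)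
  exact ⟨_, j, reachesIn_update he hmin hch le_rfl, by rwa [colorClass_update_of_ne hji]⟩

end Recolor

theorem IsForestColoring.exists_insert_of_reachesIn (hc : IsForestColoring c)
    (he₀ : c e₀ = none) {n : ℕ} (h : ReachesIn (Exchange c) e₀ n e)
    (he : ¬ (colorClass c i).Spans e) :
    ∃ c' : Sym2 V → Option ι, IsForestColoring c' ∧
      {f | c' f ≠ none} = insert e₀ {f | c f ≠ none} := by
  classical
  induction n using Nat.strong_induction_on generalizing c e i with
  | _ n ih =>
  by_cases hshort : ∃ m < n, ∃ g l, ReachesIn (Exchange c) e₀ m g ∧ ¬ (colorClass c l).Spans g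
  · obtain ⟨m, hm, g, l, hg, hgl⟩ := hshort
    exact ih m hm hc he₀ hg hgl
  push Not at hshort
  cases n with
  | zero =>
    cases h
    exact ⟨_, hc.update he, setOf_update_ne_none⟩
  | succ n =>
    obtain ⟨g, j, hg, hgj⟩ := exists_reachesIn_update h he fun m hm => hshort m (by omega)
    obtain _ | ⟨-, hstep⟩ := h
    have hce : c e ≠ none := hstep.ne_none
    obtain ⟨c', hc', hcov⟩ := ih n (by omega) (hc.update he)
      (by rwa [update_of_ne (by rintro rfl; exact hce he₀)]) hg hgj
    refine ⟨c', hc', ?_⟩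
    rw [hcov, setOf_update_ne_none, Set.insert_eq_of_mem (s := {f | c f ≠ none}) hce]

lemma exists_walk_of_mem_exchangeClosure (hc : IsForestColoring c)
    (hsat : ∀ f ∈ exchangeClosure c e₀, ∀ l, (colorClass c l).Spans f) {u w : V}
    (hg : s(u, w) ∈ exchangeClosure c e₀) (l : ι) :
    ∃ p : (colorClass c l).Walk u w, ∀ f ∈ p.edges, f ∈ exchangeClosure c e₀ := by
  classical
  obtain ⟨n, hn⟩ := hg
  obtain ⟨q⟩ : (colorClass c l).Reachable u w := hsat _ ⟨n, hn⟩ l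
  exact ⟨q.bypass, fun f hf => ⟨n + 1, hn.tail ⟨l, q.bypass.edges_subset_edgeSet hf,
    hsat _ ⟨n, hn⟩ l, (hc l).not_reachable_deleteEdges_of_mem_edges q.bypass_isPath hf⟩⟩⟩

lemma reachable_of_mem_exchangeClosure (hc : IsForestColoring c) {a b v : V}
    (hsat : ∀ f ∈ exchangeClosure c s(a, b), ∀ l, (colorClass c l).Spans f)
    (hf : f ∈ exchangeClosure c s(a, b)) (hv : v ∈ f) :
    (fromEdgeSet (exchangeClosure c s(a, b))).Reachable a v := by
  classical
  obtain ⟨n, hn⟩ := hf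
  induction hn generalizing v with
  | refl =>
    rcases Sym2.mem_iff.mp hv with rfl | rfl
    · rfl
    · exact reachable_fromEdgeSet_of_mem ⟨0, .refl⟩
  | @tail n g f hch hstep ih =>
    obtain ⟨l, -, -, hgf⟩ := hstep
    induction g using Sym2.ind with | _ u w =>
    obtain ⟨p, hp⟩ := exists_walk_of_mem_exchangeClosure hc hsat ⟨n, hch⟩ l
    have hfp : f ∈ p.edges := by
      by_contra hfp
      exact hgf ⟨p.toDeleteEdges {f} fun e he hef => hfp (hef ▸ he)⟩
    have hvp : v ∈ p.support := p.mem_support_of_mem_edges hfp hv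
    exact (ih (Sym2.mem_mk_left u w)).trans (reachable_fromEdgeSet_of_forall_mem_edges
      (p.takeUntil v hvp) fun e he => hp e (p.edges_takeUntil_subset_edges hvp he))

theorem card_mul_lt_ncard_exchangeClosure [Finite V] [Fintype ι] (hc : IsForestColoring c)
    (he₀ : c e₀ = none) (hsat : ∀ f ∈ exchangeClosure c e₀, ∀ l, (colorClass c l).Spans f) :
    Fintype.card ι * ({v | ∃ f ∈ exchangeClosure c e₀, v ∈ f}.ncard - 1) <
      (exchangeClosure c e₀).ncard := by
  induction e₀ using Sym2.ind with | _ a b =>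
  set A := exchangeClosure c s(a, b)
  have hX (l : ι) : {v | ∃ f ∈ A, v ∈ f}.ncard ≤ ({f | c f = some l} ∩ A).ncard + 1 := by
    refine (ncard_le_ncard_edgeSet_add_one
      (G := fromEdgeSet ({f | c f = some l} ∩ A)) (a := a) ?_).trans ?_
    · rintro v ⟨f, hf, hv⟩
      refine (reachable_of_mem_exchangeClosure hc hsat hf hv).of_forall_adj fun u w huw => ?_
      obtain ⟨p, hp⟩ :=
        exists_walk_of_mem_exchangeClosure hc hsat ((fromEdgeSet_adj _).mp huw).1 l
      exact reachable_fromEdgeSet_of_forall_mem_edges p fun f hf =>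
        ⟨(mem_edgeSet_colorClass.mp (p.edges_subset_edgeSet hf)).1, hp f hf⟩
    · rw [edgeSet_fromEdgeSet]
      exact Nat.add_le_add_right (Set.ncard_le_ncard Set.sdiff_subset) 1
  calc Fintype.card ι * ({v | ∃ f ∈ A, v ∈ f}.ncard - 1)
      = ∑ _l : ι, ({v | ∃ f ∈ A, v ∈ f}.ncard - 1) := by simp
    _ ≤ ∑ l, ({f | c f = some l} ∩ A).ncard := Finset.sum_le_sum fun l _ => by
      have := hX l
      omega
    _ < A.ncard := Set.sum_ncard_fiber_inter_add_one_le c ⟨0, .refl⟩ he₀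

theorem IsForestColoring.exists_insert_of_forall_ncard_le [Finite V] [Fintype ι]
    (hG : ∀ X : Set V, (G.edgeSet ∩ X.sym2).ncard ≤ Fintype.card ι * (X.ncard - 1))
    (hc : IsForestColoring c) (hcG : {f | c f ≠ none} ⊆ G.edgeSet) (he₀G : e₀ ∈ G.edgeSet)
    (he₀ : c e₀ = none) :
    ∃ c' : Sym2 V → Option ι, IsForestColoring c' ∧
      {f | c' f ≠ none} = insert e₀ {f | c f ≠ none} := by
  by_contra hno
  have hsat : ∀ f ∈ exchangeClosure c e₀, ∀ l, (colorClass c l).Spans f := by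
    rintro f ⟨n, hn⟩ l
    by_contra hfl
    exact hno (hc.exists_insert_of_reachesIn he₀ hn hfl)
  have hsub : exchangeClosure c e₀ ⊆
      G.edgeSet ∩ {v | ∃ f ∈ exchangeClosure c e₀, v ∈ f}.sym2 := fun f hf =>
    ⟨(exchangeClosure_subset hf).elim (· ▸ he₀G) (hcG ·),
      Set.mem_sym2_iff_subset.mpr fun v hv => ⟨f, hf, hv⟩⟩
  have := (Set.ncard_le_ncard hsub).trans (hG _)
  have := card_mul_lt_ncard_exchangeClosure hc he₀ hsat
  omega

theorem exists_forest_cover_of_forall_ncard_le [Finite V] (G : SimpleGraph V) (k : ℕ)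
    (hG : ∀ X : Set V, (G.edgeSet ∩ X.sym2).ncard ≤ k * (X.ncard - 1)) :
    ∃ F : Fin k → Set (Sym2 V), (∀ i, F i ⊆ G.edgeSet ∧ (fromEdgeSet (F i)).IsAcyclic) ∧
      ⋃ i, F i = G.edgeSet := by
  suffices ∃ c : Sym2 V → Option (Fin k), IsForestColoring c ∧ {f | c f ≠ none} = G.edgeSet by
    obtain ⟨c, hc, hcov⟩ := this
    refine ⟨fun i => {f | c f = some i}, fun i => ⟨fun f hf => ?_, hc i⟩, ?_⟩
    · rw [← hcov]
      exact fun h => by simp [h] at hf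
    · rw [← hcov]
      ext f
      simp [Option.ne_none_iff_exists']
  refine Set.Finite.induction_on_subset (motive := fun S _ =>
      ∃ c : Sym2 V → Option (Fin k), IsForestColoring c ∧ {f | c f ≠ none} = S)
    G.edgeSet G.edgeSet.toFinite ⟨fun _ => none, fun i => by simp [colorClass], by simp⟩ ?_
  rintro e₀ - he₀G hS he₀ ⟨c, hc, rfl⟩
  exact hc.exists_insert_of_forall_ncard_le (by simpa using hG) hS he₀G (by simpa using he₀)

section Density

variable [Finite V] (G : SimpleGraph V)

lemma ncard_edgeSet_inter_sym2_insert {X : Set V} {u : V} (hu : u ∉ X) :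
    (G.edgeSet ∩ (insert u X).sym2).ncard =
      (G.edgeSet ∩ X.sym2).ncard + {x ∈ X | G.Adj u x}.ncard := by
  have hsplit : G.edgeSet ∩ (insert u X).sym2 =
      (G.edgeSet ∩ X.sym2) ∪ Sym2.mkEmbedding u '' {x ∈ X | G.Adj u x} := by
    ext e
    induction e using Sym2.ind with | _ a b =>
    simp only [Set.mem_inter_iff, mem_edgeSet, Set.mk_mem_sym2_iff, Set.mem_insert_iff,
      Set.mem_union, Set.mem_image, Set.mem_ofPred_eq, Sym2.mkEmbedding_apply, Sym2.eq_iff]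
    constructor
    · rintro ⟨hab, rfl | ha, rfl | hb⟩
      · exact absurd rfl hab.ne
      · exact .inr ⟨b, ⟨hb, hab⟩, .inl ⟨rfl, rfl⟩⟩
      · exact .inr ⟨a, ⟨ha, hab.symm⟩, .inr ⟨rfl, rfl⟩⟩
      · exact .inl ⟨hab, ha, hb⟩
    · rintro (⟨hab, ha, hb⟩ | ⟨x, ⟨hx, hux⟩, ⟨rfl, rfl⟩ | ⟨rfl, rfl⟩⟩)
      · exact ⟨hab, .inr ha, .inr hb⟩
      · exact ⟨hux, .inl rfl, .inr hx⟩
      · exact ⟨hux.symm, .inr hx, .inl rfl⟩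
  have hdisj :
      Disjoint (G.edgeSet ∩ X.sym2) (Sym2.mkEmbedding u '' {x ∈ X | G.Adj u x}) := by
    rw [Set.disjoint_right]
    rintro _ ⟨x, -, rfl⟩ ⟨-, hux⟩
    exact hu (Set.mk_mem_sym2_iff.mp hux).1
  rw [hsplit, Set.ncard_union_eq hdisj,
    Set.ncard_image_of_injective _ (Sym2.mkEmbedding u).injective]

lemma two_mul_ncard_edgeSet_inter_sym2_le (X : Set V) :
    2 * (G.edgeSet ∩ X.sym2).ncard ≤ X.ncard * (X.ncard - 1) := by
  refine Set.Finite.induction_on (motive := fun X _ =>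
    2 * (G.edgeSet ∩ X.sym2).ncard ≤ X.ncard * (X.ncard - 1)) X X.toFinite (by simp) ?_
  intro u X hu _ ih
  have hdeg : {x ∈ X | G.Adj u x}.ncard ≤ X.ncard := Set.ncard_le_ncard (Set.sep_subset _ _)
  rw [G.ncard_edgeSet_inter_sym2_insert hu, Set.ncard_insert_of_notMem hu, Nat.add_sub_cancel]
  cases h : X.ncard with
  | zero => simp_all
  | succ x =>
    rw [h] at ih hdeg
    simp only [Nat.add_sub_cancel] at ih
    nlinarith

variable {G}

theorem ncard_edgeSet_inter_sym2_le_of_half {K : ℕ}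
    (hhalf : ∀ X : Set V, X ≠ Set.univ → ∃ u ∉ X, X.ncard ≤ 2 * {x ∈ X | G.Adj u x}.ncard)
    (hK : G.edgeSet.ncard ≤ K * (Nat.card V - 1)) (X : Set V) :
    (G.edgeSet ∩ X.sym2).ncard ≤ K * (X.ncard - 1) := by
  obtain ⟨n, hn⟩ : ∃ n, Xᶜ.ncard = n := ⟨_, rfl⟩
  induction n generalizing X with
  | zero =>
    obtain rfl : X = Set.univ := Set.compl_empty_iff.mp ((Set.ncard_eq_zero).mp hn)
    simpa using hK
  | succ n ih =>
    obtain ⟨u, hu, hux⟩ := hhalf X fun h => by simp [h] at hn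
    have hcompl := Set.ncard_add_ncard_compl X
    have hcompl' := Set.ncard_add_ncard_compl (insert u X)
    have := ih (insert u X) (by rw [Set.ncard_insert_of_notMem hu] at hcompl'; omega)
    rw [G.ncard_edgeSet_inter_sym2_insert hu, Set.ncard_insert_of_notMem hu,
      Nat.add_sub_cancel] at this
    exact Nat.le_mul_sub_one_of_add_le this hux (G.two_mul_ncard_edgeSet_inter_sym2_le X)

end Density

lemma ncard_edgeSet_le_mul_of_forest_cover [Finite V] {ι : Type*} [Fintype ι]
    {F : ι → Set (Sym2 V)} (hF : ∀ i, F i ⊆ G.edgeSet ∧ (fromEdgeSet (F i)).IsAcyclic)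
    (hcov : ⋃ i, F i = G.edgeSet) : G.edgeSet.ncard ≤ Fintype.card ι * (Nat.card V - 1) := by
  cases isEmpty_or_nonempty V
  · simp [Set.eq_empty_of_isEmpty G.edgeSet]
  have hFi (i : ι) : (F i).ncard ≤ Nat.card V - 1 := by
    have hsub : F i ⊆ (fromEdgeSet (F i)).edgeSet := fun f hf =>
      (edgeSet_fromEdgeSet _).symm ▸ ⟨hf, G.not_isDiag_of_mem_edgeSet ((hF i).1 hf)⟩
    have := (hF i).2.ncard_edgeSet_add_one_le
    have := Set.ncard_le_ncard hsub
    omega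
  calc G.edgeSet.ncard = (⋃ i, F i).ncard := by rw [hcov]
    _ ≤ ∑ i, (F i).ncard := Set.ncard_iUnion_le_of_fintype F
    _ ≤ ∑ _i : ι, (Nat.card V - 1) := Finset.sum_le_sum fun i _ => hFi i
    _ = Fintype.card ι * (Nat.card V - 1) := by simp

lemma ncard_edgeSet_eq_zero_of_card_le_one [Finite V] (G : SimpleGraph V)
    (hV : Nat.card V ≤ 1) : G.edgeSet.ncard = 0 := by
  have := Finite.card_le_one_iff_subsingleton.mp hV
  rw [Set.ncard_eq_zero, Set.eq_empty_iff_forall_notMem]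
  intro e he
  induction e using Sym2.ind with | _ a b =>
  exact he.ne (Subsingleton.elim a b)

end SimpleGraph

theorem forestCoverNumber_of_half_sets_general [Fintype V] (G : SimpleGraph V)
    (hhalf : ∀ X : Set V, X ≠ Set.univ →
      ∃ u ∉ X, X.ncard ≤ 2 * {x ∈ X | G.Adj u x}.ncard) :
    forestCoverNumber G = ⌈(G.edgeSet.ncard : ℚ) / ((Fintype.card V : ℚ) - 1)⌉₊ := by
  unfold forestCoverNumber
  rw [← Nat.card_eq_fintype_card]
  have hceil (t : ℕ) :=
    Nat.ceil_div_sub_one_le_iff (t := t) G.ncard_edgeSet_eq_zero_of_card_le_one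
  set K := ⌈(G.edgeSet.ncard : ℚ) / ((Nat.card V : ℚ) - 1)⌉₊
  have hK := G.exists_forest_cover_of_forall_ncard_le K
    (ncard_edgeSet_inter_sym2_le_of_half hhalf ((hceil K).mp le_rfl))
  refine le_antisymm (Nat.sInf_le hK) (le_csInf ⟨K, hK⟩ fun t ⟨F, hF, hcov⟩ => (hceil t).mpr ?_)
  simpa using ncard_edgeSet_le_mul_of_forest_cover hF hcov

/-- If `G` is connected and every proper subset `X` of `V(G)` is a `(1/2)`-set (some vertex
outside `X` has at least `|X|/2` neighbours in `X`), then the minimum number of forests needed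
to cover the edges of `G` equals `⌈|E(G)|/(|V(G)|−1)⌉`. -/
theorem forestCoverNumber_of_half_sets [Fintype V] (G : SimpleGraph V) (hconn : G.Connected)
    (hhalf : ∀ X : Set V, X ≠ Set.univ →
      ∃ u ∉ X, X.ncard ≤ 2 * {x ∈ X | G.Adj u x}.ncard) :
    forestCoverNumber G = ⌈(G.edgeSet.ncard : ℚ) / ((Fintype.card V : ℚ) - 1)⌉₊ :=
  forestCoverNumber_of_half_sets_general G hhalf
end

section
/- For m, n ≥ 3, pmd(P_m □ P_n) = 4, where P_k is the path on k vertices and □ is the Cartesian product. -/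
open SimpleGraph

variable {V : Type*}

namespace PmdGridAux

variable (m n : ℕ)

/-- The horizontal edges of the grid whose parity is `r`. -/
def EH (r : ℕ) : Set (Sym2 (Fin m × Fin n)) :=
  {e | ∃ (a : Fin m) (b b' : Fin n), (b : ℕ) + 1 = (b' : ℕ) ∧ ((a : ℕ) + (b : ℕ)) % 2 = r ∧
    e = s((a, b), (a, b'))}

/-- The vertical edges of the grid whose parity is `r`. -/
def EV (r : ℕ) : Set (Sym2 (Fin m × Fin n)) :=
  {e | ∃ (a a' : Fin m) (b : Fin n), (a : ℕ) + 1 = (a' : ℕ) ∧ ((a : ℕ) + (b : ℕ)) % 2 = r ∧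
    e = s((a, b), (a', b))}

noncomputable def wH (r : ℕ) : Fin m × Fin n → ℝ :=
  fun p => (-1)^(r + (p.1:ℕ) + (p.2:ℕ)) * (2:ℝ)⁻¹ ^ (p.2:ℕ)

noncomputable def wV (r : ℕ) : Fin m × Fin n → ℝ :=
  fun p => (-1)^(r + (p.1:ℕ) + (p.2:ℕ)) * (2:ℝ)⁻¹ ^ (p.1:ℕ)

variable {m n}

lemma mem_EH_iff {a c : Fin m} {b d : Fin n} {r : ℕ} :
    s((a, b), (c, d)) ∈ EH m n r ↔
      (a : ℕ) = (c : ℕ) ∧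
        (((b:ℕ) + 1 = (d:ℕ) ∧ ((a:ℕ)+(b:ℕ)) % 2 = r) ∨
         ((d:ℕ) + 1 = (b:ℕ) ∧ ((a:ℕ)+(d:ℕ)) % 2 = r)) := by
  constructor
  · rintro ⟨x, y, y', h1, h2, he⟩
    rw [Sym2.eq_iff] at he
    simp only [Prod.ext_iff, Fin.ext_iff] at he
    omega
  · rintro ⟨hac, ⟨h1, h2⟩ | ⟨h1, h2⟩⟩
    · exact ⟨a, b, d, h1, h2, by rw [Sym2.eq_iff]; simp [Prod.ext_iff, Fin.ext_iff]; omega⟩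
    · exact ⟨a, d, b, h1, h2, by rw [Sym2.eq_iff]; simp [Prod.ext_iff, Fin.ext_iff]; omega⟩

lemma mem_EV_iff {a c : Fin m} {b d : Fin n} {r : ℕ} :
    s((a, b), (c, d)) ∈ EV m n r ↔
      (b : ℕ) = (d : ℕ) ∧
        (((a:ℕ) + 1 = (c:ℕ) ∧ ((a:ℕ)+(b:ℕ)) % 2 = r) ∨
         ((c:ℕ) + 1 = (a:ℕ) ∧ ((c:ℕ)+(b:ℕ)) % 2 = r)) := by
  constructor
  · rintro ⟨x, x', y, h1, h2, he⟩
    rw [Sym2.eq_iff] at he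
    simp only [Prod.ext_iff, Fin.ext_iff] at he
    omega
  · rintro ⟨hbd, ⟨h1, h2⟩ | ⟨h1, h2⟩⟩
    · exact ⟨a, c, b, h1, h2, by rw [Sym2.eq_iff]; simp [Prod.ext_iff, Fin.ext_iff]; omega⟩
    · exact ⟨c, a, b, h1, h2, by rw [Sym2.eq_iff]; simp [Prod.ext_iff, Fin.ext_iff]; omega⟩

lemma pos_aux (k l : ℕ) : 0 < (-1:ℝ)^k * (2:ℝ)⁻¹^l ↔ k % 2 = 0 := by
  have hl : (0:ℝ) < (2:ℝ)⁻¹^l := by positivity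
  rcases Nat.even_or_odd k with h | h
  · rw [h.neg_one_pow, one_mul]
    simp [Nat.even_iff.mp h, hl]
  · rw [h.neg_one_pow, neg_one_mul]
    have := Nat.odd_iff.mp h
    constructor
    · intro hp; linarith
    · omega

lemma sum_horiz (r a b : ℕ) :
    (-1:ℝ)^(r+a+b) * (2:ℝ)⁻¹^b + (-1:ℝ)^(r+a+(b+1)) * (2:ℝ)⁻¹^(b+1)
      = (-1:ℝ)^(r+a+b) * (2:ℝ)⁻¹^(b+1) := by
  have h : r + a + (b+1) = (r+a+b)+1 := by ring
  rw [h, pow_succ, pow_succ]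
  ring

lemma sum_vert (r a b : ℕ) :
    (-1:ℝ)^(r+a+b) * (2:ℝ)⁻¹^b + (-1:ℝ)^(r+(a+1)+b) * (2:ℝ)⁻¹^b = 0 := by
  have h : r + (a+1) + b = (r+a+b)+1 := by ring
  rw [h, pow_succ]
  ring

lemma wH_spec (r : ℕ) (hr : r < 2) (u v : Fin m × Fin n)
    (h : (pathGraph m □ pathGraph n).Adj u v) :
    (0 < wH m n r u + wH m n r v ↔ s(u, v) ∈ EH m n r) := by
  obtain ⟨a, b⟩ := u; obtain ⟨c, d⟩ := v
  rw [boxProd_adj] at h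
  rcases h with ⟨h, rfl⟩ | ⟨h, rfl⟩
  · -- vertical edge: both sides false
    dsimp only at h
    rw [pathGraph_adj] at h
    have key : wH m n r (a, b) + wH m n r (c, b) = 0 := by
      simp only [wH]
      rcases h with h | h
      · rw [← h]; exact sum_vert r a.val b.val
      · rw [← h]; linarith [sum_vert r c.val b.val]
    rw [key, mem_EH_iff]
    simp only [lt_irrefl, false_iff]
    rintro ⟨-, ⟨h1, -⟩ | ⟨h1, -⟩⟩ <;> omega
  · -- horizontal edge
    dsimp only at h
    rw [pathGraph_adj] at h
    rcases h with h | h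
    · have key : wH m n r (a, b) + wH m n r (a, d) = (-1:ℝ)^(r+(a:ℕ)+(b:ℕ)) * (2:ℝ)⁻¹^((b:ℕ)+1) := by
        simp only [wH]
        rw [← h]
        exact sum_horiz r a.val b.val
      rw [key, pos_aux, mem_EH_iff]
      simp only [eq_self_iff_true, true_and]
      omega
    · have key : wH m n r (a, b) + wH m n r (a, d) = (-1:ℝ)^(r+(a:ℕ)+(d:ℕ)) * (2:ℝ)⁻¹^((d:ℕ)+1) := by
        simp only [wH]
        rw [← h]
        linarith [sum_horiz r a.val d.val]
      rw [key, pos_aux, mem_EH_iff]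
      simp only [eq_self_iff_true, true_and]
      omega

lemma wV_spec (r : ℕ) (hr : r < 2) (u v : Fin m × Fin n)
    (h : (pathGraph m □ pathGraph n).Adj u v) :
    (0 < wV m n r u + wV m n r v ↔ s(u, v) ∈ EV m n r) := by
  obtain ⟨a, b⟩ := u; obtain ⟨c, d⟩ := v
  rw [boxProd_adj] at h
  rcases h with ⟨h, rfl⟩ | ⟨h, rfl⟩
  · dsimp only at h
    rw [pathGraph_adj] at h
    rcases h with h | h
    · have key : wV m n r (a, b) + wV m n r (c, b) = (-1:ℝ)^(r+(a:ℕ)+(b:ℕ)) * (2:ℝ)⁻¹^((a:ℕ)+1) := by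
        simp only [wV]
        rw [← h]
        calc (-1:ℝ)^(r+(a:ℕ)+(b:ℕ)) * (2:ℝ)⁻¹^(a:ℕ) + (-1:ℝ)^(r+((a:ℕ)+1)+(b:ℕ)) * (2:ℝ)⁻¹^((a:ℕ)+1)
            = (-1:ℝ)^(r+(b:ℕ)+(a:ℕ)) * (2:ℝ)⁻¹^(a:ℕ) + (-1:ℝ)^(r+(b:ℕ)+((a:ℕ)+1)) * (2:ℝ)⁻¹^((a:ℕ)+1) := by
              ring_nf
          _ = (-1:ℝ)^(r+(b:ℕ)+(a:ℕ)) * (2:ℝ)⁻¹^((a:ℕ)+1) := sum_horiz r b.val a.val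
          _ = (-1:ℝ)^(r+(a:ℕ)+(b:ℕ)) * (2:ℝ)⁻¹^((a:ℕ)+1) := by ring_nf
      rw [key, pos_aux, mem_EV_iff]
      simp only [eq_self_iff_true, true_and]
      omega
    · have key : wV m n r (a, b) + wV m n r (c, b) = (-1:ℝ)^(r+(c:ℕ)+(b:ℕ)) * (2:ℝ)⁻¹^((c:ℕ)+1) := by
        simp only [wV]
        rw [← h]
        calc (-1:ℝ)^(r+((c:ℕ)+1)+(b:ℕ)) * (2:ℝ)⁻¹^((c:ℕ)+1) + (-1:ℝ)^(r+(c:ℕ)+(b:ℕ)) * (2:ℝ)⁻¹^(c:ℕ)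
            = (-1:ℝ)^(r+(b:ℕ)+(c:ℕ)) * (2:ℝ)⁻¹^(c:ℕ) + (-1:ℝ)^(r+(b:ℕ)+((c:ℕ)+1)) * (2:ℝ)⁻¹^((c:ℕ)+1) := by
              ring_nf
          _ = (-1:ℝ)^(r+(b:ℕ)+(c:ℕ)) * (2:ℝ)⁻¹^((c:ℕ)+1) := sum_horiz r b.val c.val
          _ = (-1:ℝ)^(r+(c:ℕ)+(b:ℕ)) * (2:ℝ)⁻¹^((c:ℕ)+1) := by ring_nf
      rw [key, pos_aux, mem_EV_iff]
      simp only [eq_self_iff_true, true_and]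
      omega
  · dsimp only at h
    rw [pathGraph_adj] at h
    have key : wV m n r (a, b) + wV m n r (a, d) = 0 := by
      simp only [wV]
      rcases h with h | h
      · rw [← h]
        have e : r + (a:ℕ) + ((b:ℕ)+1) = r + (a:ℕ) + (b:ℕ) + 1 := by ring
        rw [e, pow_succ]; ring
      · rw [← h]
        have e : r + (a:ℕ) + ((d:ℕ)+1) = r + (a:ℕ) + (d:ℕ) + 1 := by ring
        rw [e, pow_succ]; ring
    rw [key, mem_EV_iff]
    simp only [lt_irrefl, false_iff]
    rintro ⟨h1, -⟩
    rcases h with h | h <;> omega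

lemma EH_matching (r : ℕ) :
    ∀ e ∈ EH m n r, ∀ f ∈ EH m n r, e ≠ f → ∀ v, v ∈ e → v ∉ f := by
  rintro e ⟨a, b, b', hb, hpar, rfl⟩ f ⟨c, d, d', hd, hpar', rfl⟩ hne v hv hvf
  apply hne
  rw [Sym2.mem_iff] at hv hvf
  have key : (a:ℕ) = (c:ℕ) ∧ (b:ℕ) = (d:ℕ) := by
    rcases hv with rfl | rfl <;> rcases hvf with h | h <;>
      (simp only [Prod.ext_iff, Fin.ext_iff] at h; omega)
  have h1 : a = c := Fin.ext key.1
  have h2 : b = d := Fin.ext key.2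
  have h3 : b' = d' := Fin.ext (by omega)
  rw [h1, h2, h3]

lemma EV_matching (r : ℕ) :
    ∀ e ∈ EV m n r, ∀ f ∈ EV m n r, e ≠ f → ∀ v, v ∈ e → v ∉ f := by
  rintro e ⟨a, a', b, ha, hpar, rfl⟩ f ⟨c, c', d, hc, hpar', rfl⟩ hne v hv hvf
  apply hne
  rw [Sym2.mem_iff] at hv hvf
  have key : (a:ℕ) = (c:ℕ) ∧ (b:ℕ) = (d:ℕ) := by
    rcases hv with rfl | rfl <;> rcases hvf with h | h <;>
      (simp only [Prod.ext_iff, Fin.ext_iff] at h; omega)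
  have h1 : a = c := Fin.ext key.1
  have h2 : b = d := Fin.ext key.2
  have h3 : a' = c' := Fin.ext (by omega)
  rw [h1, h2, h3]

lemma EH_disj {r r' : ℕ} (h : r ≠ r') : Disjoint (EH m n r) (EH m n r') := by
  rw [Set.disjoint_left]
  rintro e ⟨a, b, b', hb, hpar, rfl⟩ he
  rw [mem_EH_iff] at he
  rcases he with ⟨-, ⟨h1, h2⟩ | ⟨h1, h2⟩⟩ <;> omega

lemma EV_disj {r r' : ℕ} (h : r ≠ r') : Disjoint (EV m n r) (EV m n r') := by
  rw [Set.disjoint_left]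
  rintro e ⟨a, a', b, ha, hpar, rfl⟩ he
  rw [mem_EV_iff] at he
  rcases he with ⟨-, ⟨h1, h2⟩ | ⟨h1, h2⟩⟩ <;> omega

lemma EH_EV_disj (r r' : ℕ) : Disjoint (EH m n r) (EV m n r') := by
  rw [Set.disjoint_left]
  rintro e ⟨a, b, b', hb, hpar, rfl⟩ he
  rw [mem_EV_iff] at he
  omega

lemma EH_subset (r : ℕ) : EH m n r ⊆ (pathGraph m □ pathGraph n).edgeSet := by
  rintro e ⟨a, b, b', hb, -, rfl⟩
  rw [mem_edgeSet, boxProd_adj]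
  exact Or.inr ⟨pathGraph_adj.mpr (Or.inl hb), rfl⟩

lemma EV_subset (r : ℕ) : EV m n r ⊆ (pathGraph m □ pathGraph n).edgeSet := by
  rintro e ⟨a, a', b, ha, -, rfl⟩
  rw [mem_edgeSet, boxProd_adj]
  exact Or.inl ⟨pathGraph_adj.mpr (Or.inl ha), rfl⟩

lemma union_eq :
    EH m n 0 ∪ (EH m n 1 ∪ (EV m n 0 ∪ EV m n 1)) = (pathGraph m □ pathGraph n).edgeSet := by
  ext e
  induction e with
  | _ x y =>
    obtain ⟨a, b⟩ := x; obtain ⟨c, d⟩ := y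
    simp only [Set.mem_union, mem_EH_iff, mem_EV_iff, mem_edgeSet, boxProd_adj, pathGraph_adj,
      Fin.ext_iff]
    omega

variable (m n)

/-- The four parts of the positive matching decomposition of the grid. -/
def Egrid : Fin 4 → Set (Sym2 (Fin m × Fin n)) := fun i =>
  if i.val = 0 then EH m n 0 else if i.val = 1 then EH m n 1
  else if i.val = 2 then EV m n 0 else EV m n 1

variable {m n}

lemma Egrid_isPMD : IsPMD (pathGraph m □ pathGraph n) (Egrid m n) := by
  have hd : ∀ i j : Fin 4, i ≠ j → Disjoint (Egrid m n i) (Egrid m n j) := by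
    intro i j hne
    fin_cases i <;> fin_cases j <;>
      first
        | exact absurd rfl hne
        | (simp only [Egrid]
           norm_num
           first
             | exact EH_disj (by omega)
             | exact (EH_disj (by omega)).symm
             | exact EH_EV_disj _ _
             | exact (EH_EV_disj _ _).symm
             | exact EV_disj (by omega)
             | exact (EV_disj (by omega)).symm)
  have hnot : ∀ (i : Fin 4) e, e ∈ Egrid m n i →
      e ∉ ⋃ j : Fin 4, ⋃ (_ : j < i), Egrid m n j := by
    intro i e he hmem
    rw [Set.mem_iUnion] at hmem
    obtain ⟨j, hj⟩ := hmem
    rw [Set.mem_iUnion] at hj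
    obtain ⟨hji, hj⟩ := hj
    exact Set.disjoint_left.mp (hd i j hji.ne') he hj
  have hsub : ∀ i : Fin 4, Egrid m n i ⊆ (pathGraph m □ pathGraph n).edgeSet := by
    intro i
    fin_cases i
    · exact EH_subset 0
    · exact EH_subset 1
    · exact EV_subset 0
    · exact EV_subset 1
  refine ⟨hd, ?_, ?_⟩
  · apply Set.Subset.antisymm
    · intro e he
      rw [Set.mem_iUnion] at he
      obtain ⟨i, hi⟩ := he
      exact hsub i hi
    · intro e he
      rw [← union_eq] at he
      simp only [Set.mem_union] at he
      rw [Set.mem_iUnion]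
      rcases he with h | h | h | h
      · exact ⟨0, h⟩
      · exact ⟨1, h⟩
      · exact ⟨2, h⟩
      · exact ⟨3, h⟩
  · intro i
    have hadj : ∀ u v : Fin m × Fin n,
        ((pathGraph m □ pathGraph n).deleteEdges
          (⋃ j : Fin 4, ⋃ (_ : j < i), Egrid m n j)).Adj u v →
        (pathGraph m □ pathGraph n).Adj u v := by
      intro u v huv
      exact (SimpleGraph.deleteEdges_adj.mp huv).1
    refine ⟨?_, ?_, ?_⟩
    · rw [edgeSet_deleteEdges]
      intro e he
      exact ⟨hsub i he, hnot i e he⟩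
    · fin_cases i
      · exact EH_matching 0
      · exact EH_matching 1
      · exact EV_matching 0
      · exact EV_matching 1
    · fin_cases i
      · exact ⟨wH m n 0, fun u v huv => wH_spec 0 (by omega) u v (hadj u v huv)⟩
      · exact ⟨wH m n 1, fun u v huv => wH_spec 1 (by omega) u v (hadj u v huv)⟩
      · exact ⟨wV m n 0, fun u v huv => wV_spec 0 (by omega) u v (hadj u v huv)⟩
      · exact ⟨wV m n 1, fun u v huv => wV_spec 1 (by omega) u v (hadj u v huv)⟩

lemma pmd_lower_bound (hm : 3 ≤ m) (hn : 3 ≤ n) (p : ℕ)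
    (E : Fin p → Set (Sym2 (Fin m × Fin n)))
    (h : IsPMD (pathGraph m □ pathGraph n) E) : 4 ≤ p := by
  obtain ⟨hdisj, hunion, hpos⟩ := h
  set v : Fin m × Fin n := (⟨1, by omega⟩, ⟨1, by omega⟩) with hv
  let u : Fin 4 → Fin m × Fin n :=
    ![(⟨0, by omega⟩, ⟨1, by omega⟩), (⟨2, by omega⟩, ⟨1, by omega⟩),
      (⟨1, by omega⟩, ⟨0, by omega⟩), (⟨1, by omega⟩, ⟨2, by omega⟩)]
  have hadj : ∀ k, (pathGraph m □ pathGraph n).Adj v (u k) := by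
    intro k
    fin_cases k <;>
      simp [u, hv, boxProd_adj, pathGraph_adj]
  have hune : ∀ k l : Fin 4, k ≠ l → u k ≠ u l := by
    intro k l hkl
    fin_cases k <;> fin_cases l <;>
      simp_all [u, Prod.ext_iff, Fin.ext_iff]
  have hmem : ∀ k, ∃ i, s(v, u k) ∈ E i := by
    intro k
    have : s(v, u k) ∈ ⋃ i, E i := by
      rw [hunion]; exact (mem_edgeSet _).mpr (hadj k)
    exact Set.mem_iUnion.mp this
  choose g hg using hmem
  have ginj : Function.Injective g := by
    intro k l hkl
    by_contra hne
    have h1 := hg k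
    rw [hkl] at h1
    have hM := (hpos (g l)).2.1
    have hEne : s(v, u k) ≠ s(v, u l) := by
      intro hE
      rw [Sym2.eq_iff] at hE
      rcases hE with ⟨-, h2⟩ | ⟨h2, h3⟩
      · exact hune k l hne h2
      · exact hune k l hne (h3.trans h2)
    exact hM _ h1 _ (hg l) hEne v (Sym2.mem_mk_left _ _) (Sym2.mem_mk_left _ _)
  calc 4 = Fintype.card (Fin 4) := by simp
    _ ≤ Fintype.card (Fin p) := Fintype.card_le_of_injective g ginj
    _ = p := by simp

end PmdGridAux

/-- For `m, n ≥ 3`, `pmd(Pₘ □ Pₙ) = 4`. -/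
theorem pmd_pathGraph_boxProd (m n : ℕ) (hm : 3 ≤ m) (hn : 3 ≤ n) :
    pmd (pathGraph m □ pathGraph n) = 4 := by
  have h4 : 4 ∈ {p : ℕ | ∃ E : Fin p → Set (Sym2 (Fin m × Fin n)),
      IsPMD (pathGraph m □ pathGraph n) E} :=
    ⟨PmdGridAux.Egrid m n, PmdGridAux.Egrid_isPMD⟩
  refine le_antisymm (Nat.sInf_le h4) (le_csInf ⟨4, h4⟩ ?_)
  rintro p ⟨E, hE⟩
  exact PmdGridAux.pmd_lower_bound hm hn p E hE
end
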